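/- arXiv:math/0507511 — 8 statements merged into one kernel-verified Lean document; each statement's English description precedes it below -/
import Mathlib

section
/- For every prime p ≥ 5, Wolstenholme's congruence holds: ∑_{j=1}^{p-1} 1/j ≡ 0 (mod p²), i.e., p² divides the numerator of the (p-1)-st harmonic number. -/
/-!
Pair `j` with `p - j`: modulo `p²` one has `1/j + 1/(p - j) ≡ -p/j²`, so twice the
harmonic sum is `-p` times `∑ 1/j²`, and modulo `p` the latter is `∑ x²` over `𝔽_p`, which
vanishes once `p - 1 > 2`. Multiplying the harmonic sum by `∏ j`, which is prime to `p`,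
carries the congruence in `ZMod (p²)` over to the numerator.
-/

open Finset

theorem Nat.coprime_pow_of_mem_Ico_one {p j : ℕ} (hp : p.Prime) (hj : j ∈ Ico 1 p) (k : ℕ) :
    j.Coprime (p ^ k) :=
  (Nat.coprime_of_lt_prime (by grind) (mem_Ico.mp hj).2 hp).symm.pow_right k

theorem Rat.dvd_num_of_intCast_mul_eq {q : ℚ} {m d N : ℤ} (hmd : IsCoprime m d)
    (hq : d * q = N) (hN : m ∣ N) : m ∣ q.num := by
  have hnum : q.num * d = N * q.den := by
    have : (q.num : ℚ) * d = N * q.den := by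
      rw [← hq, ← Rat.mul_den_eq_num]; ring
    exact_mod_cast this
  exact hmd.dvd_of_dvd_mul_right (hnum ▸ hN.mul_right _)

theorem dvd_num_sum_one_div_of_sum_inv_eq_zero {s : Finset ℕ} {n : ℕ}
    (hs : ∀ j ∈ s, 0 < j ∧ j.Coprime n) (h : ∑ j ∈ s, (j : ZMod n)⁻¹ = 0) :
    (n : ℤ) ∣ (∑ j ∈ s, (1 : ℚ) / j).num := by
  set N := ∑ j ∈ s, ∏ i ∈ s.erase j, i
  have hq : ((∏ j ∈ s, j : ℕ) : ℚ) * ∑ j ∈ s, (1 : ℚ) / j = (N : ℚ) := by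
    push_cast [N, mul_sum]
    refine sum_congr rfl fun j hj => ?_
    rw [← mul_prod_erase s _ hj]
    field_simp [Nat.cast_ne_zero.mpr (hs j hj).1.ne']
  have hN : (N : ZMod n) = 0 := by
    push_cast [N]
    calc ∑ j ∈ s, ∏ i ∈ s.erase j, (i : ZMod n)
        = ∑ j ∈ s, (∏ i ∈ s, (i : ZMod n)) * (j : ZMod n)⁻¹ := by
          refine sum_congr rfl fun j hj => ?_
          rw [← mul_prod_erase s _ hj, mul_comm, ← mul_assoc, mul_comm _ (j : ZMod n),
            ZMod.coe_mul_inv_eq_one j (hs j hj).2, one_mul]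
      _ = 0 := by rw [← mul_sum, h, mul_zero]
  refine Rat.dvd_num_of_intCast_mul_eq (d := ((∏ j ∈ s, j : ℕ) : ℤ)) (N := N) ?_
    (by exact_mod_cast hq) (Int.natCast_dvd_natCast.mpr ((ZMod.natCast_eq_zero_iff _ _).mp hN))
  exact Nat.isCoprime_iff_coprime.mpr (Nat.Coprime.prod_right fun j hj => (hs j hj).2.symm)

theorem FiniteField.sum_inv_pow_lt_card_sub_one {K : Type*} [Field K] [Fintype K] {k : ℕ}
    (hk : k < Fintype.card K - 1) : ∑ x : K, x⁻¹ ^ k = 0 := by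
  calc ∑ x : K, x⁻¹ ^ k = ∑ x : K, x ^ k := Equiv.sum_comp (Equiv.inv K) (· ^ k)
    _ = 0 := FiniteField.sum_pow_lt_card_sub_one K k hk

namespace ZMod

theorem sum_range_natCast {M : Type*} [AddCommMonoid M] (n : ℕ) [NeZero n] (f : ZMod n → M) :
    ∑ j ∈ range n, f j = ∑ x, f x :=
  sum_nbij' (fun j => (j : ZMod n)) val (by simp) (fun x _ => by simpa using val_lt x)
    (fun j hj => val_cast_of_lt (mem_range.mp hj)) (fun x _ => natCast_zmod_val x) (fun _ _ => rfl)

theorem sum_Ico_inv_pow_eq_zero {p k : ℕ} [Fact p.Prime] (hk₀ : k ≠ 0) (hk : k < p - 1) :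
    ∑ j ∈ Ico 1 p, (j : ZMod p)⁻¹ ^ k = 0 := by
  rw [← FiniteField.sum_inv_pow_lt_card_sub_one (K := ZMod p) (by rwa [ZMod.card]),
    ← sum_range_natCast p (fun x => x⁻¹ ^ k), range_eq_Ico,
    sum_eq_sum_Ico_succ_bot (Fact.out : p.Prime).pos]
  simp [hk₀]

theorem castHom_inv {m n : ℕ} (h : m ∣ n) {x : ZMod n} (hx : IsUnit x) :
    castHom h (ZMod m) x⁻¹ = (castHom h (ZMod m) x)⁻¹ :=
  (ZMod.inv_eq_of_mul_eq_one _ _ _ (by rw [← map_mul, mul_inv_of_unit x hx, map_one])).symm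

theorem natCast_mul_eq_zero_of_castHom_eq_zero {n : ℕ} [NeZero n] {x : ZMod (n ^ 2)}
    (hx : castHom (dvd_pow_self n two_ne_zero) (ZMod n) x = 0) : (n : ZMod (n ^ 2)) * x = 0 := by
  rw [castHom_apply, ← natCast_val, natCast_eq_zero_iff] at hx
  obtain ⟨k, hk⟩ := hx
  rw [← natCast_zmod_val x, hk, ← Nat.cast_mul, ← mul_assoc, ← sq, natCast_eq_zero_iff]
  exact dvd_mul_right _ _

theorem inv_add_inv_of_sq_eq_zero {n : ℕ} {a b : ZMod n} (ha : IsUnit a) (hb : IsUnit b)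
    (hab : (a + b) ^ 2 = 0) : a⁻¹ + b⁻¹ = -(a + b) * a⁻¹ ^ 2 := by
  -- after multiplying by `a² b` both sides differ by `a b + a² + (a + b) b = (a + b)²`
  refine ((ha.pow 2).mul hb).mul_left_cancel ?_
  have ha' := mul_inv_of_unit a ha
  have hb' := mul_inv_of_unit b hb
  linear_combination (a * b + (a + b) * b * (a * a⁻¹ + 1)) * ha' + a ^ 2 * hb' + hab

theorem sum_Ico_inv_eq_zero {p : ℕ} [Fact p.Prime] (hp : 5 ≤ p) :
    ∑ j ∈ Ico 1 p, (j : ZMod (p ^ 2))⁻¹ = 0 := by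
  have hprime : p.Prime := Fact.out
  have hunit : ∀ j ∈ Ico 1 p, IsUnit (j : ZMod (p ^ 2)) := fun j hj =>
    (isUnit_iff_coprime j _).mpr (Nat.coprime_pow_of_mem_Ico_one hprime hj 2)
  have hreflect : ∑ j ∈ Ico 1 p, ((p - j : ℕ) : ZMod (p ^ 2))⁻¹ =
      ∑ j ∈ Ico 1 p, (j : ZMod (p ^ 2))⁻¹ := by
    rw [sum_Ico_reflect (fun j => (j : ZMod (p ^ 2))⁻¹) 1 (Nat.le_succ p)]
    simp
  have hpair : ∀ j ∈ Ico 1 p, (j : ZMod (p ^ 2))⁻¹ + ((p - j : ℕ) : ZMod (p ^ 2))⁻¹ =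
      -p * (j : ZMod (p ^ 2))⁻¹ ^ 2 := by
    intro j hj
    have hsum : (j : ZMod (p ^ 2)) + ((p - j : ℕ) : ZMod (p ^ 2)) = p := by
      rw [← Nat.cast_add, Nat.add_sub_cancel' (mem_Ico.mp hj).2.le]
    rw [inv_add_inv_of_sq_eq_zero (hunit j hj) (hunit (p - j) (by grind))
      (by rw [hsum, ← Nat.cast_pow, natCast_self]), hsum]
  have hsq : (p : ZMod (p ^ 2)) * ∑ j ∈ Ico 1 p, (j : ZMod (p ^ 2))⁻¹ ^ 2 = 0 := by
    refine natCast_mul_eq_zero_of_castHom_eq_zero ?_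
    rw [map_sum, ← sum_Ico_inv_pow_eq_zero two_ne_zero (by omega : 2 < p - 1)]
    refine sum_congr rfl fun j hj => ?_
    rw [map_pow, castHom_inv _ (hunit j hj), map_natCast]
  have htwo : IsUnit (2 : ZMod (p ^ 2)) := by
    simpa using hunit 2 (by grind)
  refine htwo.mul_left_cancel ?_
  calc 2 * ∑ j ∈ Ico 1 p, (j : ZMod (p ^ 2))⁻¹
      = ∑ j ∈ Ico 1 p, ((j : ZMod (p ^ 2))⁻¹ + ((p - j : ℕ) : ZMod (p ^ 2))⁻¹) := by
        rw [sum_add_distrib, hreflect, two_mul]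
    _ = -(p * ∑ j ∈ Ico 1 p, (j : ZMod (p ^ 2))⁻¹ ^ 2) := by
        rw [sum_congr rfl hpair, mul_sum, ← sum_neg_distrib]
        simp only [neg_mul]
    _ = 2 * 0 := by rw [hsq, neg_zero, mul_zero]

end ZMod

/-- Wolstenholme's congruence: for a prime `p ≥ 5`, `p²` divides the numerator of
the harmonic number `∑_{j=1}^{p-1} 1/j`. -/
theorem wolstenholme_congruence (p : ℕ) (hp : p.Prime) (h5 : 5 ≤ p) :
    ((p : ℤ))^2 ∣ (∑ j ∈ Finset.Icc 1 (p-1), (1 : ℚ)/j).num := by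
  have : Fact p.Prime := ⟨hp⟩
  have hIcc : Icc 1 (p - 1) = Ico 1 p := by
    ext j; simp only [mem_Icc, mem_Ico]; omega
  have hcoprime : ∀ j ∈ Ico 1 p, 0 < j ∧ j.Coprime (p ^ 2) := fun j hj =>
    ⟨(mem_Ico.mp hj).1, Nat.coprime_pow_of_mem_Ico_one hp hj 2⟩
  rw [hIcc]
  exact_mod_cast dvd_num_sum_one_div_of_sum_inv_eq_zero hcoprime (ZMod.sum_Ico_inv_eq_zero h5)
end

section
/- For every prime p ≥ 5, in the ring ℤ[q] localized at polynomials coprime to [p]_q, one has ∑_{j=1}^{p-1} 1/[j]_q ≡ ((p-1)/2)(1-q) + ((p²-1)/24)(1-q)²[p]_q (mod [p]_q²). -/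
open Polynomial Finset

/-- `[n]_q = 1 + q + ⋯ + q^(n-1)` in `ℤ[q]`. -/
noncomputable def qnumZ (n : ℕ) : ℤ[X] := ∑ i ∈ Finset.range n, X ^ i

/-- The embedding of `ℤ[q]` into its fraction field. -/
noncomputable def ΦZ : ℤ[X] →+* FractionRing ℤ[X] := algebraMap _ _

/-!
Pairing `j` with `p - j` and using `[p] = [j] + q^j [p-j]` gives
`2 ∑ 1/[j] = (p-1)(1-q) - [p] ∑ q^j/[j]² + [p]² ∑ 1/([p-j][j]²)`,
so it remains to compute `∑ q^j/[j]²` modulo `[p]`, i.e. at a primitive `p`-th root of unity `ζ`.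
There `q^j/[j]² = (1-ζ)² ζ^j/(1-ζ^j)²`, and writing `1/(ζ^j - 1) = (1/p) ∑_k k ζ^{jk}` and using
the orthogonality of the characters `j ↦ ζ^{jm}` gives `∑_j ζ^j/(1-ζ^j)² = -(p²-1)/12`.
-/

section PowerSums

variable {R : Type*} [CommRing R]

theorem sum_range_natCast_mul_two (n : ℕ) : (∑ k ∈ range n, (k : R)) * 2 = n * (n - 1) := by
  induction n with
  | zero => simp
  | succ n ih => rw [sum_range_succ, add_mul, ih]; push_cast; ring

theorem sum_range_natCast_sq_mul_six (n : ℕ) :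
    (∑ k ∈ range n, (k : R) ^ 2) * 6 = n * (n - 1) * (2 * n - 1) := by
  induction n with
  | zero => simp
  | succ n ih => rw [sum_range_succ, add_mul, ih]; push_cast; ring

theorem sum_range_natCast_mul_pow_mul_sub_one (x : R) (n : ℕ) :
    (∑ k ∈ range n, (k : R) * x ^ k) * (x - 1)
      = n * x ^ n - x ^ n - ∑ k ∈ range n, x ^ k + 1 := by
  induction n with
  | zero => simp
  | succ n ih => rw [sum_range_succ, sum_range_succ, add_mul, ih]; push_cast; ring

end PowerSums

theorem Nat.Prime.twenty_four_dvd_sq_sub_one {p : ℕ} (hp : p.Prime) (h5 : 5 ≤ p) :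
    24 ∣ p ^ 2 - 1 := by
  have h2 : ¬ 2 ∣ p := fun h => by have := hp.eq_one_or_self_of_dvd 2 h; omega
  have h3 : ¬ 3 ∣ p := fun h => by have := hp.eq_one_or_self_of_dvd 3 h; omega
  have hres : ∀ r < 24, ¬ 2 ∣ r → ¬ 3 ∣ r → r ^ 2 % 24 = 1 := by decide
  have := hres (p % 24) (Nat.mod_lt _ (by norm_num)) (by omega) (by omega)
  rw [← Nat.pow_mod] at this
  omega

namespace IsPrimitiveRoot

variable {K : Type*} [Field K] {n : ℕ} {ζ : K}

theorem geom_sum_pow_eq_ite (hζ : IsPrimitiveRoot ζ n) (m : ℕ) :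
    ∑ j ∈ range n, (ζ ^ m) ^ j = if n ∣ m then (n : K) else 0 := by
  split_ifs with h
  · simp [(hζ.pow_eq_one_iff_dvd m).2 h]
  · rw [geom_sum_eq (mt (hζ.pow_eq_one_iff_dvd m).1 h), pow_right_comm, hζ.pow_eq_one,
      one_pow, sub_self, zero_div]

theorem sum_natCast_mul_pow_pow_mul_sub_one (hζ : IsPrimitiveRoot ζ n) {j : ℕ} (hj : ¬ n ∣ j) :
    (∑ k ∈ range n, (k : K) * (ζ ^ j) ^ k) * (ζ ^ j - 1) = n := by
  rw [sum_range_natCast_mul_pow_mul_sub_one, hζ.geom_sum_pow_eq_ite j, if_neg hj,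
    pow_right_comm, hζ.pow_eq_one, one_pow]
  ring

theorem sum_pow_mul_sum_natCast_mul_pow_pow_sq (hζ : IsPrimitiveRoot ζ n) :
    ∑ j ∈ range n, ζ ^ j * (∑ k ∈ range n, (k : K) * (ζ ^ j) ^ k) ^ 2
      = n * ∑ k ∈ range n, (k : K) * (n - 1 - k) := by
  have hexpand : ∀ j, ζ ^ j * (∑ k ∈ range n, (k : K) * (ζ ^ j) ^ k) ^ 2
      = ∑ k ∈ range n, ∑ l ∈ range n, (k : K) * l * (ζ ^ (k + l + 1)) ^ j := by
    intro j
    rw [sq, sum_mul_sum, mul_sum]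
    exact sum_congr rfl fun k _ => by rw [mul_sum]; exact sum_congr rfl fun l _ => by ring
  -- for `k, l < n` the exponent `k + l + 1` lies in `[1, 2n)`
  have hdvd : ∀ k ∈ range n, ∀ l ∈ range n, n ∣ k + l + 1 ↔ n - 1 - k = l := by
    intro k hk l hl
    rw [mem_range] at hk hl
    constructor
    · intro h
      have := Nat.eq_of_dvd_of_lt_two_mul (by omega) h (by omega)
      omega
    · rintro rfl
      exact ⟨1, by omega⟩
  simp_rw [hexpand]
  rw [sum_comm, mul_sum]
  refine sum_congr rfl fun k hk => ?_
  rw [sum_comm]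
  simp_rw [← mul_sum, hζ.geom_sum_pow_eq_ite]
  rw [sum_congr rfl fun l hl => by rw [if_congr (hdvd k hk l hl) rfl rfl]]
  rw [mem_range] at hk
  simp only [mul_ite, mul_zero, sum_ite_eq, mem_range.2 (show n - 1 - k < n by omega), if_true]
  rw [Nat.sub_sub, Nat.cast_sub (by omega), Nat.cast_add, Nat.cast_one]
  ring

theorem sum_pow_div_one_sub_pow_sq_mul_twelve [NeZero n] (hζ : IsPrimitiveRoot ζ n) :
    (∑ j ∈ Ico 1 n, ζ ^ j / (1 - ζ ^ j) ^ 2) * 12 = 1 - (n : K) ^ 2 := by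
  have hn : (n : K) ≠ 0 := hζ.neZero'.out
  set W : ℕ → K := fun j => ∑ k ∈ range n, (k : K) * (ζ ^ j) ^ k
  -- `W j = n / (ζ ^ j - 1)` turns each term into a polynomial in `ζ ^ j`
  have hterm : ∀ j ∈ Ico 1 n, ζ ^ j / (1 - ζ ^ j) ^ 2 = ζ ^ j * W j ^ 2 / n ^ 2 := by
    intro j hj
    have hndvd := Nat.not_dvd_of_pos_of_lt (mem_Ico.1 hj).1 (mem_Ico.1 hj).2
    have hWj := hζ.sum_natCast_mul_pow_pow_mul_sub_one hndvd
    have hne : 1 - ζ ^ j ≠ 0 := sub_ne_zero.2 (Ne.symm (mt (hζ.pow_eq_one_iff_dvd j).1 hndvd))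
    rw [div_eq_div_iff (pow_ne_zero 2 hne) (pow_ne_zero 2 hn)]
    linear_combination (-ζ ^ j * (W j * (ζ ^ j - 1) + n)) * hWj
  have hsum := hζ.sum_pow_mul_sum_natCast_mul_pow_pow_sq
  rw [sum_range_eq_add_Ico _ (Nat.pos_of_neZero n)] at hsum
  simp only [pow_zero, one_pow, mul_one, one_mul, mul_sub, sum_sub_distrib, ← sum_mul,
    ← sq] at hsum
  have h1 := sum_range_natCast_mul_two (R := K) n
  have h2 := sum_range_natCast_sq_mul_six (R := K) n
  rw [sum_congr rfl hterm, ← sum_div, div_mul_eq_mul_div, div_eq_iff (pow_ne_zero 2 hn)]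
  linear_combination (12 : K) * hsum - 2 * (n : K) * h2
    - 3 * ((∑ k ∈ range n, (k : K)) * 2 - n * (n - 1)) * h1

end IsPrimitiveRoot

theorem map_sum_mul_prod_erase {R F ι : Type*} [CommRing R] [Field F] [DecidableEq ι]
    (φ : R →+* F) (s : Finset ι) (f g : ι → R) (hg : ∀ i ∈ s, φ (g i) ≠ 0) :
    φ (∑ i ∈ s, f i * ∏ k ∈ s.erase i, g k) = φ (∏ i ∈ s, g i) * ∑ i ∈ s, φ (f i) / φ (g i) := by
  simp only [map_sum, map_mul, map_prod, mul_sum]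
  refine sum_congr rfl fun i hi => ?_
  rw [← mul_prod_erase s _ hi]
  field_simp [hg i hi]

section LocalizedSpanPow

variable {R K : Type*} [CommRing R] [Field K] [Algebra R K] {π : R}

/-- The ideal `π ^ n R_(π)` of the localization of `R` at the prime `π`, as a submodule of `K`. -/
def localizedSpanPow (hπ : Prime π) (n : ℕ) : Submodule R K where
  carrier := {x | ∃ a b, ¬ π ∣ b ∧ x * algebraMap R K b = algebraMap R K (π ^ n * a)}
  zero_mem' := ⟨0, 1, hπ.not_dvd_one, by simp⟩
  add_mem' := by
    rintro x y ⟨a, b, hb, hx⟩ ⟨a', b', hb', hy⟩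
    refine ⟨a * b' + a' * b, b * b', fun h => (hπ.dvd_or_dvd h).elim hb hb', ?_⟩
    simp only [map_mul, map_add] at hx hy ⊢
    linear_combination algebraMap R K b' * hx + algebraMap R K b * hy
  smul_mem' := by
    rintro r x ⟨a, b, hb, hx⟩
    refine ⟨r * a, b, hb, ?_⟩
    simp only [Algebra.smul_def, map_mul] at hx ⊢
    linear_combination algebraMap R K r * hx

variable {hπ : Prime π} {n : ℕ} {x : K}

theorem algebraMap_mul_mem_localizedSpanPow_succ (hx : x ∈ localizedSpanPow hπ n) :
    algebraMap R K π * x ∈ localizedSpanPow hπ (n + 1) := by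
  obtain ⟨a, b, hb, hx⟩ := hx
  refine ⟨a, b, hb, ?_⟩
  rw [mul_assoc, hx, ← map_mul, pow_succ', mul_assoc]

theorem inv_algebraMap_mem_localizedSpanPow_zero {b : R} (hb : ¬ π ∣ b) :
    (algebraMap R K b)⁻¹ ∈ localizedSpanPow hπ 0 := by
  by_cases h : algebraMap R K b = 0
  · rw [h, inv_zero]
    exact zero_mem _
  · exact ⟨1, b, hb, by simp [h]⟩

theorem mem_localizedSpanPow_of_algebraMap_mul {c : R} (hc : ¬ π ∣ c)
    (hx : algebraMap R K c * x ∈ localizedSpanPow hπ n) : x ∈ localizedSpanPow hπ n := by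
  obtain ⟨a, b, hb, hx⟩ := hx
  refine ⟨a, c * b, fun h => (hπ.dvd_or_dvd h).elim hc hb, ?_⟩
  rw [← hx, map_mul]
  ring

end LocalizedSpanPow

theorem qnumZ_add (m n : ℕ) : qnumZ (m + n) = qnumZ m + X ^ m * qnumZ n := by
  simp only [qnumZ, sum_range_add, mul_sum, pow_add]

theorem one_sub_X_mul_qnumZ (n : ℕ) : (1 - X) * qnumZ n = 1 - X ^ n :=
  mul_neg_geom_sum X n

theorem ΦZ_qnumZ_ne_zero {n : ℕ} (hn : n ≠ 0) : ΦZ (qnumZ n) ≠ 0 :=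
  (map_ne_zero_iff ΦZ (IsFractionRing.injective _ _)).2 fun h =>
    hn (by simpa [qnumZ] using congrArg (eval 1) h)

theorem qnumZ_eq_cyclotomic {p : ℕ} (hp : p.Prime) : qnumZ p = cyclotomic p ℤ := by
  have := Fact.mk hp
  rw [cyclotomic_prime]
  rfl

theorem prime_qnumZ {p : ℕ} (hp : p.Prime) : Prime (qnumZ p) := by
  rw [qnumZ_eq_cyclotomic hp]
  exact (cyclotomic.irreducible hp.pos).prime

theorem qnumZ_dvd_iff_aeval_eq_zero {K : Type*} [Field K] [CharZero K] {p : ℕ} (hp : p.Prime)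
    {ζ : K} (hζ : IsPrimitiveRoot ζ p) (f : ℤ[X]) : qnumZ p ∣ f ↔ aeval ζ f = 0 := by
  rw [qnumZ_eq_cyclotomic hp, cyclotomic_eq_minpoly hζ hp.pos,
    minpoly.isIntegrallyClosed_dvd_iff (hζ.isIntegral hp.pos)]

theorem aeval_qnumZ_mul_one_sub {K : Type*} [Field K] (ζ : K) (n : ℕ) :
    aeval ζ (qnumZ n) * (1 - ζ) = 1 - ζ ^ n := by
  simpa [mul_comm] using congrArg (aeval ζ) (one_sub_X_mul_qnumZ n)

theorem aeval_qnumZ_ne_zero {K : Type*} [Field K] {n : ℕ} {ζ : K} (hζ : IsPrimitiveRoot ζ n)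
    {j : ℕ} (hj : ¬ n ∣ j) : aeval ζ (qnumZ j) ≠ 0 := by
  intro h
  have := aeval_qnumZ_mul_one_sub ζ j
  rw [h, zero_mul, eq_comm, sub_eq_zero, eq_comm, hζ.pow_eq_one_iff_dvd] at this
  exact hj this

theorem not_qnumZ_dvd_qnumZ {p j : ℕ} (hp : p.Prime) (hj : j ∈ Ico 1 p) :
    ¬ qnumZ p ∣ qnumZ j := by
  obtain ⟨ζ, hζ⟩ : ∃ ζ : ℂ, IsPrimitiveRoot ζ p := ⟨_, Complex.isPrimitiveRoot_exp p hp.ne_zero⟩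
  rw [qnumZ_dvd_iff_aeval_eq_zero hp hζ]
  exact aeval_qnumZ_ne_zero hζ (Nat.not_dvd_of_pos_of_lt (mem_Ico.1 hj).1 (mem_Ico.1 hj).2)

theorem not_qnumZ_dvd_two {p : ℕ} (hp : p.Prime) : ¬ qnumZ p ∣ 2 := by
  obtain ⟨ζ, hζ⟩ : ∃ ζ : ℂ, IsPrimitiveRoot ζ p := ⟨_, Complex.isPrimitiveRoot_exp p hp.ne_zero⟩
  rw [qnumZ_dvd_iff_aeval_eq_zero hp hζ, map_ofNat]
  exact two_ne_zero

theorem inv_add_inv_eq {F : Type*} [Field F] {a b u x w : F} (ha : a ≠ 0) (hb : b ≠ 0)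
    (hu : u = a + x * b) (hw : w * a = 1 - x) :
    a⁻¹ + b⁻¹ = w - u * (x / a ^ 2) + u ^ 2 * (b * a ^ 2)⁻¹ := by
  obtain rfl : w = (1 - x) / a := by rw [eq_div_iff ha, hw]
  subst hu
  field_simp
  ring

theorem two_mul_sum_inv_map_qnumZ {F : Type*} [Field F] (φ : ℤ[X] →+* F) {n : ℕ}
    (hφ : ∀ j ∈ Ico 1 n, φ (qnumZ j) ≠ 0) :
    2 * ∑ j ∈ Ico 1 n, (φ (qnumZ j))⁻¹
      = ((n - 1 : ℕ) : F) * φ (1 - X) - φ (qnumZ n) * (∑ j ∈ Ico 1 n, φ (X ^ j) / φ (qnumZ j ^ 2)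
          - φ (qnumZ n) * ∑ j ∈ Ico 1 n, (φ (qnumZ (n - j) * qnumZ j ^ 2))⁻¹) := by
  have hreflect : ∑ j ∈ Ico 1 n, (φ (qnumZ (n - j)))⁻¹ = ∑ j ∈ Ico 1 n, (φ (qnumZ j))⁻¹ :=
    sum_nbij' (fun j => n - j) (fun j => n - j) (fun j hj => by simp at hj ⊢; omega)
      (fun j hj => by simp at hj ⊢; omega) (fun j hj => by simp at hj; omega)
      (fun j hj => by simp at hj; omega) (fun _ _ => rfl)
  have hpair : ∀ j ∈ Ico 1 n, (φ (qnumZ j))⁻¹ + (φ (qnumZ (n - j)))⁻¹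
      = φ (1 - X) - φ (qnumZ n) * (φ (X ^ j) / φ (qnumZ j ^ 2))
        + φ (qnumZ n) ^ 2 * (φ (qnumZ (n - j) * qnumZ j ^ 2))⁻¹ := by
    intro j hj
    have hj' := mem_Ico.1 hj
    rw [map_mul, map_pow φ (qnumZ j)]
    refine inv_add_inv_eq (hφ j hj) (hφ (n - j) (by simp; omega)) ?_ ?_
    · rw [← map_mul, ← map_add, ← qnumZ_add, Nat.add_sub_cancel' hj'.2.le]
    · rw [← map_mul, one_sub_X_mul_qnumZ, map_sub, map_one]
  rw [two_mul]
  nth_rw 2 [← hreflect]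
  rw [← sum_add_distrib, sum_congr rfl hpair, sum_add_distrib, sum_sub_distrib, sum_const,
    Nat.card_Ico, nsmul_eq_mul, ← mul_sum, ← mul_sum]
  ring

theorem IsPrimitiveRoot.sum_aeval_X_pow_div_qnumZ_sq_mul_twelve {K : Type*} [Field K] {n : ℕ}
    [NeZero n] {ζ : K} (hζ : IsPrimitiveRoot ζ n) :
    (∑ j ∈ Ico 1 n, aeval ζ ((X : ℤ[X]) ^ j) / aeval ζ (qnumZ j ^ 2)) * 12
      = (1 - (n : K) ^ 2) * (1 - ζ) ^ 2 := by
  have hterm : ∀ j ∈ Ico 1 n, aeval ζ ((X : ℤ[X]) ^ j) / aeval ζ (qnumZ j ^ 2)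
      = ζ ^ j / (1 - ζ ^ j) ^ 2 * (1 - ζ) ^ 2 := by
    intro j hj
    have hj := Nat.not_dvd_of_pos_of_lt (mem_Ico.1 hj).1 (mem_Ico.1 hj).2
    have hq := aeval_qnumZ_mul_one_sub ζ j
    have hne : 1 - ζ ≠ 0 := right_ne_zero_of_mul
      (hq ▸ sub_ne_zero.2 (Ne.symm (mt (hζ.pow_eq_one_iff_dvd j).1 hj)))
    rw [map_pow, map_pow, aeval_X, ← hq]
    field_simp [aeval_qnumZ_ne_zero hζ hj]
  rw [sum_congr rfl hterm, ← sum_mul, ← hζ.sum_pow_div_one_sub_pow_sq_mul_twelve]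
  ring

theorem IsPrimitiveRoot.sum_aeval_X_pow_div_qnumZ_sq_add_eq_zero {K : Type*} [Field K]
    [CharZero K] {p : ℕ}
    (hp : p.Prime) (h5 : 5 ≤ p) {ζ : K} (hζ : IsPrimitiveRoot ζ p) :
    ∑ j ∈ Ico 1 p, aeval ζ ((X : ℤ[X]) ^ j) / aeval ζ (qnumZ j ^ 2)
      + aeval ζ (2 * (((p ^ 2 - 1) / 24 : ℕ) : ℤ[X]) * (1 - X) ^ 2) = 0 := by
  have : NeZero p := ⟨hp.ne_zero⟩
  have h12 := hζ.sum_aeval_X_pow_div_qnumZ_sq_mul_twelve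
  have h24 := congrArg (Nat.cast (R := K)) (Nat.div_mul_cancel (hp.twenty_four_dvd_sq_sub_one h5))
  rw [Nat.cast_mul, Nat.cast_sub (Nat.one_le_pow _ _ hp.pos)] at h24
  push_cast at h24
  have hr : aeval ζ (2 * (((p ^ 2 - 1) / 24 : ℕ) : ℤ[X]) * (1 - X) ^ 2)
      = 2 * (((p ^ 2 - 1) / 24 : ℕ) : K) * (1 - ζ) ^ 2 := by
    simp only [map_mul, map_pow, map_sub, map_one, aeval_X, map_natCast, map_ofNat]
  rw [hr]
  linear_combination h12 / 12 + (1 - ζ) ^ 2 / 12 * h24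

theorem sum_X_pow_div_qnumZ_sq_add_mem_localizedSpanPow {p : ℕ} (hp : p.Prime) (h5 : 5 ≤ p) :
    ∑ j ∈ Ico 1 p, ΦZ (X ^ j) / ΦZ (qnumZ j ^ 2)
        + ΦZ (2 * (((p ^ 2 - 1) / 24 : ℕ) : ℤ[X]) * (1 - X) ^ 2)
      ∈ localizedSpanPow (prime_qnumZ hp) 1 := by
  obtain ⟨ζ, hζ⟩ : ∃ ζ : ℂ, IsPrimitiveRoot ζ p := ⟨_, Complex.isPrimitiveRoot_exp p hp.ne_zero⟩
  set r : ℤ[X] := 2 * (((p ^ 2 - 1) / 24 : ℕ) : ℤ[X]) * (1 - X) ^ 2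
  set D := ∏ j ∈ Ico 1 p, qnumZ j ^ 2
  set N := ∑ j ∈ Ico 1 p, X ^ j * ∏ k ∈ (Ico 1 p).erase j, qnumZ k ^ 2 + r * D
  have hnum : ∀ {F : Type} [Field F] (φ : ℤ[X] →+* F), (∀ j ∈ Ico 1 p, φ (qnumZ j ^ 2) ≠ 0) →
      φ N = φ D * (∑ j ∈ Ico 1 p, φ (X ^ j) / φ (qnumZ j ^ 2) + φ r) := by
    intro F _ φ hφ
    rw [map_add, map_sum_mul_prod_erase φ _ _ _ hφ, map_mul]
    ring
  have hD : ¬ qnumZ p ∣ D := fun h => by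
    obtain ⟨j, hj, hdvd⟩ := ((prime_qnumZ hp).dvd_finsetProd_iff _).1 h
    exact not_qnumZ_dvd_qnumZ hp hj ((prime_qnumZ hp).dvd_of_dvd_pow hdvd)
  obtain ⟨a, ha⟩ : qnumZ p ∣ N := by
    rw [qnumZ_dvd_iff_aeval_eq_zero hp hζ]
    have := hnum (aeval ζ).toRingHom fun j hj => by
      rw [AlgHom.toRingHom_eq_coe, RingHom.coe_coe, map_pow]
      exact pow_ne_zero 2
        (aeval_qnumZ_ne_zero hζ (Nat.not_dvd_of_pos_of_lt (mem_Ico.1 hj).1 (mem_Ico.1 hj).2))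
    simp only [AlgHom.toRingHom_eq_coe, RingHom.coe_coe] at this
    rw [this, hζ.sum_aeval_X_pow_div_qnumZ_sq_add_eq_zero hp h5, mul_zero]
  refine ⟨a, D, hD, ?_⟩
  change _ * ΦZ D = ΦZ _
  rw [pow_one, ← ha, hnum ΦZ fun j hj => by
    rw [map_pow]; exact pow_ne_zero 2 (ΦZ_qnumZ_ne_zero (by simp at hj; omega))]
  ring

/-- The `q`-analogue of Wolstenholme's congruence: for a prime `p ≥ 5`,
`∑_{j=1}^{p-1} 1/[j]_q ≡ ((p-1)/2)(1-q) + ((p²-1)/24)(1-q)²[p]_q (mod [p]_q²)`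
in the localization of `ℤ[q]` at the polynomials coprime to `[p]_q`: the difference
of the two sides can be written as `[p]_q² a / b` with `b` not divisible by the
irreducible polynomial `[p]_q`. -/
theorem q_wolstenholme (p : ℕ) (hp : p.Prime) (h5 : 5 ≤ p) :
    ∃ a b : ℤ[X], ¬ (qnumZ p ∣ b) ∧
      ((∑ j ∈ Finset.Icc 1 (p-1), (ΦZ (qnumZ j))⁻¹)
        - ΦZ ((((p-1)/2 : ℕ) : ℤ[X]) * (1 - X)
            + (((p^2-1)/24 : ℕ) : ℤ[X]) * (1 - X)^2 * qnumZ p))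
        * ΦZ b = ΦZ (qnumZ p ^ 2 * a) := by
  have hπ := prime_qnumZ hp
  have hE : ∑ j ∈ Ico 1 p, (ΦZ (qnumZ (p - j) * qnumZ j ^ 2))⁻¹ ∈ localizedSpanPow hπ 0 :=
    sum_mem fun j hj => inv_algebraMap_mem_localizedSpanPow_zero fun h =>
      (hπ.dvd_or_dvd h).elim (not_qnumZ_dvd_qnumZ hp (by simp at hj ⊢; omega))
        fun h => not_qnumZ_dvd_qnumZ hp hj (hπ.dvd_of_dvd_pow h)
  have hC : 2 * ΦZ ((((p-1)/2 : ℕ) : ℤ[X]) * (1 - X)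
      + (((p^2-1)/24 : ℕ) : ℤ[X]) * (1 - X)^2 * qnumZ p)
      = ((p - 1 : ℕ) : FractionRing ℤ[X]) * ΦZ (1 - X)
        + ΦZ (2 * (((p ^ 2 - 1) / 24 : ℕ) : ℤ[X]) * (1 - X) ^ 2) * ΦZ (qnumZ p) := by
    have hodd : ((p - 1 : ℕ) : FractionRing ℤ[X]) = (((p - 1) / 2 : ℕ) : FractionRing ℤ[X]) * 2 :=
      by exact_mod_cast (Nat.div_mul_cancel (hp.even_sub_one (by omega)).two_dvd).symm
    rw [hodd]
    simp only [map_add, map_mul, map_natCast, map_ofNat]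
    ring
  suffices h : _ ∈ localizedSpanPow hπ 2 from h
  rw [show Icc 1 (p - 1) = Ico 1 p by ext; simp; omega]
  refine mem_localizedSpanPow_of_algebraMap_mul (c := 2) (not_qnumZ_dvd_two hp) ?_
  rw [map_ofNat, mul_sub, two_mul_sum_inv_map_qnumZ ΦZ fun j hj =>
    ΦZ_qnumZ_ne_zero (by simp at hj; omega), hC]
  -- twice the difference is `-[p] (∑ q^j/[j]² + 2c(1-q)² - [p] ∑ 1/([p-j][j]²))`
  convert neg_mem (algebraMap_mul_mem_localizedSpanPow_succ
    (sub_mem (sum_X_pow_div_qnumZ_sq_add_mem_localizedSpanPow hp h5)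
      (algebraMap_mul_mem_localizedSpanPow_succ hE))) using 1
  change _ = -(ΦZ (qnumZ p) * (_ - ΦZ (qnumZ p) * _))
  ring
end

section
/- Let p be a prime and m a positive integer not divisible by p. Then the q-analogue of Fermat's little theorem holds: (q^m; q^m)_{p-1} / (q; q)_{p-1} ≡ 1 (mod [p]_q), where the left side is a polynomial in ℤ[q]. -/
open Polynomial Finset

private lemma qflt_geom (j m : ℕ) :
    (∑ i ∈ Finset.range m, (X : ℤ[X])^(j*i)) * (1 - X^j) = 1 - X^(m*j) := by
  have h := geom_sum_mul ((X : ℤ[X])^j) m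
  have h1 : ∀ i, (X : ℤ[X])^(j*i) = ((X:ℤ[X])^j)^i := fun i => by rw [← pow_mul]
  have h2 : (X : ℤ[X])^(m*j) = ((X:ℤ[X])^j)^m := by rw [← pow_mul, Nat.mul_comm]
  simp only [h1, h2]
  linear_combination (-1 : ℤ[X]) * h

/-- `q`-analogue of Fermat's little theorem: for a prime `p` and a positive integer `m`
not divisible by `p`, the ratio `(q^m;q^m)_{p-1}/(q;q)_{p-1}` is a polynomial `f ∈ ℤ[q]`
(i.e. `f·(q;q)_{p-1} = (q^m;q^m)_{p-1}`) and `f ≡ 1 (mod [p]_q)` in `ℤ[q]`. -/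
theorem q_fermat_little (p m : ℕ) (hp : p.Prime) (hm : 0 < m) (hpm : ¬ p ∣ m) :
    ∃ f : ℤ[X],
      f * (∏ j ∈ Finset.Icc 1 (p-1), (1 - X^j)) = (∏ j ∈ Finset.Icc 1 (p-1), (1 - X^(m*j)))
      ∧ (∑ i ∈ Finset.range p, (X : ℤ[X])^i) ∣ (f - 1) := by
  haveI : Fact p.Prime := ⟨hp⟩
  set Φ : ℤ[X] := ∑ i ∈ Finset.range p, (X : ℤ[X])^i with hΦdef
  set P : ℤ[X] := ∏ j ∈ Finset.Icc 1 (p-1), (1 - X^j) with hPdef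
  set Q : ℤ[X] := ∏ j ∈ Finset.Icc 1 (p-1), (1 - X^(m*j)) with hQdef
  set f : ℤ[X] := ∏ j ∈ Finset.Icc 1 (p-1), (∑ i ∈ Finset.range m, X^(j*i)) with hfdef
  -- f * P = Q
  have hfP : f * P = Q := by
    rw [hfdef, hPdef, hQdef, ← Finset.prod_mul_distrib]
    exact Finset.prod_congr rfl fun j _ => qflt_geom j m
  -- Φ is prime
  have hΦcyc : Φ = cyclotomic p ℤ := (cyclotomic_prime ℤ p).symm
  have hΦprime : Prime Φ := by
    rw [hΦcyc]
    exact UniqueFactorizationMonoid.irreducible_iff_prime.mp (cyclotomic.irreducible hp.pos)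
  -- Φ divides X^p - 1
  have hΦXp : Φ ∣ (X : ℤ[X])^p - 1 := ⟨X - 1, (geom_sum_mul X p).symm⟩
  -- Φ ∣ X^a - X^(a % p)
  have hmod : ∀ a : ℕ, Φ ∣ (X : ℤ[X])^a - X^(a % p) := by
    intro a
    have key : (X : ℤ[X])^a - X^(a % p) = X^(a % p) * (((X:ℤ[X])^p)^(a/p) - 1) := by
      rw [mul_sub, mul_one, ← pow_mul, ← pow_add, Nat.mod_add_div]
    rw [key]
    refine Dvd.dvd.mul_left ?_ _
    have := sub_dvd_pow_sub_pow ((X : ℤ[X])^p) 1 (a/p)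
    rw [one_pow] at this
    exact hΦXp.trans this
  -- quotient ring
  set I := Ideal.span {Φ} with hIdef
  set π : ℤ[X] →+* ℤ[X] ⧸ I := Ideal.Quotient.mk I with hπdef
  have hπeq : ∀ a b : ℤ[X], Φ ∣ a - b → π a = π b := fun a b h =>
    Ideal.Quotient.eq.mpr (Ideal.mem_span_singleton.mpr h)
  have hπX : ∀ a : ℕ, π ((X:ℤ[X])^a) = π (X^(a % p)) := fun a => hπeq _ _ (hmod a)
  -- π Q = π P via reindexing
  have hQP : π Q = π P := by
    rw [hQdef, hPdef, map_prod, map_prod]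
    refine Finset.prod_bij (fun j _ => m * j % p) ?_ ?_ ?_ ?_
    · intro j hj
      rw [Finset.mem_Icc] at hj ⊢
      have hjpos : 0 < j := hj.1
      have hjlt : j < p := lt_of_le_of_lt hj.2 (Nat.sub_lt hp.pos one_pos)
      have hndvd : ¬ p ∣ m * j := by
        intro h
        rcases (hp.dvd_mul.mp h) with h | h
        · exact hpm h
        · exact absurd (Nat.le_of_dvd hjpos h) (not_le.mpr hjlt)
      constructor
      · rcases Nat.eq_zero_or_pos (m * j % p) with h | h
        · exact absurd (Nat.dvd_of_mod_eq_zero h) hndvd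
        · exact h
      · exact Nat.le_sub_one_of_lt (Nat.mod_lt _ hp.pos)
    · intro a ha b hb hab
      rw [Finset.mem_Icc] at ha hb
      have hcop : Nat.gcd p m = 1 := hp.coprime_iff_not_dvd.mpr hpm
      have hmeq : a ≡ b [MOD p] := Nat.ModEq.cancel_left_of_coprime hcop hab
      have ha' : a < p := lt_of_le_of_lt ha.2 (Nat.sub_lt hp.pos one_pos)
      have hb' : b < p := lt_of_le_of_lt hb.2 (Nat.sub_lt hp.pos one_pos)
      calc a = a % p := (Nat.mod_eq_of_lt ha').symm
        _ = b % p := hmeq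
        _ = b := Nat.mod_eq_of_lt hb'
    · intro b hb
      have := Finset.surj_on_of_inj_on_of_card_le (s := Finset.Icc 1 (p-1))
        (t := Finset.Icc 1 (p-1)) (fun j _ => m * j % p) ?_ ?_ le_rfl b hb
      · obtain ⟨a, ha, hab⟩ := this
        exact ⟨a, ha, hab.symm⟩
      · intro j hj
        rw [Finset.mem_Icc] at hj ⊢
        have hjpos : 0 < j := hj.1
        have hjlt : j < p := lt_of_le_of_lt hj.2 (Nat.sub_lt hp.pos one_pos)
        have hndvd : ¬ p ∣ m * j := by
          intro h
          rcases (hp.dvd_mul.mp h) with h | h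
          · exact hpm h
          · exact absurd (Nat.le_of_dvd hjpos h) (not_le.mpr hjlt)
        constructor
        · rcases Nat.eq_zero_or_pos (m * j % p) with h | h
          · exact absurd (Nat.dvd_of_mod_eq_zero h) hndvd
          · exact h
        · exact Nat.le_sub_one_of_lt (Nat.mod_lt _ hp.pos)
      · intro x y hx hy hxy
        rw [Finset.mem_Icc] at hx hy
        have hcop : Nat.gcd p m = 1 := hp.coprime_iff_not_dvd.mpr hpm
        have hmeq : x ≡ y [MOD p] := Nat.ModEq.cancel_left_of_coprime hcop hxy
        have hx' : x < p := lt_of_le_of_lt hx.2 (Nat.sub_lt hp.pos one_pos)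
        have hy' : y < p := lt_of_le_of_lt hy.2 (Nat.sub_lt hp.pos one_pos)
        calc x = x % p := (Nat.mod_eq_of_lt hx').symm
          _ = y % p := hmeq
          _ = y := Nat.mod_eq_of_lt hy' 
    · intro j hj
      have : π (1 - (X:ℤ[X])^(m*j)) = π (1 - X^(m*j % p)) := by
        refine hπeq _ _ ?_
        have := hmod (m*j)
        have heq : (1 : ℤ[X]) - X^(m*j) - (1 - X^(m*j % p)) = -(X^(m*j) - X^(m*j % p)) := by ring
        rw [heq]
        exact (hmod (m*j)).neg_right
      exact this
  -- Φ ∣ (f-1) * P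
  have hdvd1 : Φ ∣ (f - 1) * P := by
    have : (f - 1) * P = Q - P := by rw [sub_mul, hfP, one_mul]
    rw [this]
    exact Ideal.mem_span_singleton.mp (Ideal.Quotient.eq.mp hQP)
  -- Φ does not divide P
  have hnotP : ¬ Φ ∣ P := by
    intro hdvd
    obtain ⟨j, hj, hdvdj⟩ := hΦprime.exists_mem_finset_dvd hdvd
    rw [Finset.mem_Icc] at hj
    have hjlt : j < p := lt_of_le_of_lt hj.2 (Nat.sub_lt hp.pos one_pos)
    have hdvdj' : Φ ∣ (X:ℤ[X])^j - 1 := by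
      have h1 : Φ ∣ -((1:ℤ[X]) - X^j) := dvd_neg.mpr hdvdj
      rwa [neg_sub] at h1
    obtain ⟨g, hg⟩ := hdvdj'
    have hΦ1 : Φ.eval 1 = (p : ℤ) := by
      simp [hΦdef]
    have hg1 : g.eval 1 = 0 := by
      have := congrArg (eval 1) hg
      simp [hΦ1] at this
      rcases this with h | h
      · exact absurd h (by exact_mod_cast hp.pos.ne')
      · exact h
    have hX1g : (X - C (1:ℤ)) ∣ g := (dvd_iff_isRoot).mpr hg1
    obtain ⟨h, hh⟩ := hX1g
    have hkey : (X:ℤ[X])^j - 1 = ((X:ℤ[X])^p - 1) * h := by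
      have hXp : (X:ℤ[X])^p - 1 = Φ * (X - 1) := (geom_sum_mul X p).symm
      rw [hg, hh, hXp, map_one]
      ring
    have hne : ((X:ℤ[X])^j - 1) ≠ 0 := fun h0 => by
      have := congrArg (eval 0) h0
      simp [zero_pow (Nat.one_le_iff_ne_zero.mp hj.1)] at this
    have hdle : Polynomial.natDegree ((X:ℤ[X])^p - 1) ≤ Polynomial.natDegree ((X:ℤ[X])^j - 1) :=
      Polynomial.natDegree_le_of_dvd ⟨h, hkey⟩ hne
    have hdp : Polynomial.natDegree ((X:ℤ[X])^p - 1) = p := by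
      have : ((X:ℤ[X])^p - 1) = X^p - C 1 := by simp
      rw [this, natDegree_X_pow_sub_C]
    have hdj : Polynomial.natDegree ((X:ℤ[X])^j - 1) = j := by
      have : ((X:ℤ[X])^j - 1) = X^j - C 1 := by simp
      rw [this, natDegree_X_pow_sub_C]
    rw [hdp, hdj] at hdle
    exact absurd hdle (not_le.mpr hjlt)
  rcases (hΦprime.dvd_mul.mp hdvd1) with h | h
  · exact ⟨f, hfP, h⟩
  · exact absurd h hnotP
end

section
/- Let p ≥ 5 be prime and m ≥ 2 an integer with p ∤ m. Set M = m·∑_{k=1}^{m-1} binom(⌊kp/m⌋+1, 2). Then (-1)^{(p-1)(m-1)/2} q^M ∏_{k=1}^{m-1} C(p-1, ⌊kp/m⌋)_{q^m} ≡ m·(q^m;q^m)_{p-1}/(q;q)_{p-1} - m + 1 (mod [p]_q²) in ℤ[q]. -/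
/-!
Work in `A = ℚ[q] ⧸ ([p]_q ^ 2)`. There `ε = 1 - q ^ p` squares to zero and `1 - q ^ t` is a
unit for `p ∤ t`, so `q` is a primitive `p`-th root of unity to first order in `ε`, and
`∏ (x_j + ε y_j) = ∏ x_j * (1 + ε ∑ y_j / x_j)` for units `x_j`.
Pairing `j` with `p - j` and using `q ^ (m p) = 1 - m ε` gives
`q ^ (m C(a+1, 2)) C(p-1, a)_{q^m} = (-1) ^ a (1 - m ε ∑_{j ≤ a} 1 / (1 - q ^ (m j)))`,
while writing `m j = p ⌊m j / p⌋ + r_j` and permuting the residues `r_j` gives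
`(q^m; q^m)_{p-1} / (q; q)_{p-1} = 1 + ε ∑_j ⌊m j / p⌋ (1 / (1 - q ^ (m j)) - 1)`.
Counting the `k` with `j ≤ ⌊k p / m⌋` reduces the difference of the two sides to
`m ε ((m - 1) ∑_c 1 / (1 - q ^ c) - ∑_j ⌊m j / p⌋)`, and both sums are `(p - 1) / 2` times
`m - 1`: the first by `1 / (1 - ζ ^ c) + 1 / (1 - ζ ^ (-c)) = 1`, the second by
`⌊j m / p⌋ + ⌊(p - j) m / p⌋ = m - 1`.
-/

open Polynomial Finset

theorem Nat.Coprime.not_dvd_mul_of_pos_of_lt {m p j : ℕ} (hmp : m.Coprime p) (hj : 0 < j)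
    (hjp : j < p) : ¬ p ∣ m * j := fun h =>
  absurd (Nat.le_of_dvd hj (hmp.symm.dvd_of_dvd_mul_left h)) (by omega)

theorem Nat.mul_div_add_sub_mul_div_of_coprime {u v k : ℕ} (hcop : v.Coprime u)
    (hk : k ∈ Icc 1 (v - 1)) : k * u / v + (v - k) * u / v = u - 1 := by
  simp only [mem_Icc] at hk
  have hu : 0 < u := Nat.pos_of_ne_zero fun hu => by
    rw [hu, Nat.coprime_zero_right] at hcop; omega
  have hr : k * u % v ≠ 0 := fun h =>
    hcop.symm.not_dvd_mul_of_pos_of_lt hk.1 (by omega) (by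
      rw [mul_comm]; exact Nat.dvd_of_mod_eq_zero h)
  have hdiv := Nat.div_add_mod (k * u) v
  have hmod := Nat.mod_lt (k * u) (by omega : 0 < v)
  have hlt : k * u / v < u := Nat.div_lt_of_lt_mul (Nat.mul_lt_mul_of_pos_right (by omega) hu)
  generalize k * u / v = a at *
  generalize k * u % v = r at *
  have hsplit : (v - k) * u = (v - r) + v * (u - 1 - a) := by
    zify [(by omega : k ≤ v), hmod.le, (by omega : 1 ≤ u), (by omega : a ≤ u - 1)] at hdiv ⊢
    linear_combination hdiv
  have : (v - k) * u / v = u - 1 - a := by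
    rw [hsplit, Nat.add_mul_div_left _ _ (by omega), Nat.div_eq_of_lt (by omega), zero_add]
  omega

theorem Nat.mul_div_le_sub_one_of_coprime {u v k : ℕ} (hcop : v.Coprime u)
    (hk : k ∈ Icc 1 (v - 1)) : k * u / v ≤ u - 1 :=
  Nat.le.intro (Nat.mul_div_add_sub_mul_div_of_coprime hcop hk)

theorem Finset.two_nsmul_sum_Icc_of_add_reflect {M : Type*} [AddCommMonoid M] {n : ℕ}
    {f : ℕ → M} {s : M} (h : ∀ c ∈ Icc 1 (n - 1), f c + f (n - c) = s) :
    2 • ∑ c ∈ Icc 1 (n - 1), f c = (n - 1) • s := by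
  have hreflect : ∑ c ∈ Icc 1 (n - 1), f (n - c) = ∑ c ∈ Icc 1 (n - 1), f c := by
    refine sum_nbij' (n - ·) (n - ·) ?_ ?_ ?_ ?_ fun _ _ => rfl <;>
      · intro c hc
        simp only [mem_Icc] at hc ⊢
        omega
  rw [two_nsmul]
  nth_rw 2 [← hreflect]
  rw [← sum_add_distrib, sum_congr rfl h, sum_const, Nat.card_Icc, Nat.add_sub_cancel]

theorem Nat.two_mul_sum_Icc_mul_div_of_coprime {u v : ℕ} (hcop : v.Coprime u) :
    2 * ∑ k ∈ Icc 1 (v - 1), k * u / v = (v - 1) * (u - 1) := by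
  simpa using two_nsmul_sum_Icc_of_add_reflect (n := v) (f := (· * u / v)) fun k hk =>
    Nat.mul_div_add_sub_mul_div_of_coprime hcop hk

theorem Finset.prod_Icc_mul_mod {M : Type*} [CommMonoid M] {m p : ℕ} (hmp : m.Coprime p)
    (f : ℕ → M) : ∏ j ∈ Icc 1 (p - 1), f (m * j % p) = ∏ j ∈ Icc 1 (p - 1), f j := by
  have hinj : Set.InjOn (m * · % p) (Icc 1 (p - 1)) := by
    intro a ha b hb hab
    simp only [coe_Icc, Set.mem_Icc] at ha hb
    have := Nat.ModEq.cancel_left_of_coprime hmp.symm.gcd_eq_one hab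
    rwa [Nat.ModEq, Nat.mod_eq_of_lt (by omega), Nat.mod_eq_of_lt (by omega)] at this
  have hmaps : ∀ j ∈ Icc 1 (p - 1), m * j % p ∈ Icc 1 (p - 1) := by
    intro j hj
    simp only [mem_Icc] at hj ⊢
    have hndvd := hmp.not_dvd_mul_of_pos_of_lt hj.1 (by omega)
    have := Nat.mod_lt (m * j) (by omega : 0 < p)
    have : m * j % p ≠ 0 := fun h => hndvd (Nat.dvd_of_mod_eq_zero h)
    omega
  have himage : (Icc 1 (p - 1)).image (m * · % p) = Icc 1 (p - 1) :=
    eq_of_subset_of_card_le (image_subset_iff.2 hmaps) (card_image_of_injOn hinj).ge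
  conv_rhs => rw [← himage]
  exact (prod_image hinj).symm

theorem Finset.sum_Icc_mul_mod {M : Type*} [AddCommMonoid M] {m p : ℕ} (hmp : m.Coprime p)
    (f : ℕ → M) : ∑ j ∈ Icc 1 (p - 1), f (m * j % p) = ∑ j ∈ Icc 1 (p - 1), f j :=
  prod_Icc_mul_mod (M := Multiplicative M) hmp f

theorem Nat.le_mul_div_iff_mul_div_lt {m p j k : ℕ} (hmp : m.Coprime p) (hj : 0 < j)
    (hjp : j < p) : j ≤ k * p / m ↔ m * j / p < k := by
  have hm : 0 < m := Nat.pos_of_ne_zero fun hm => by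
    rw [hm, Nat.coprime_zero_left] at hmp; omega
  have hne : m * j ≠ k * p := fun h =>
    hmp.not_dvd_mul_of_pos_of_lt hj hjp (h ▸ dvd_mul_left p k)
  rw [Nat.le_div_iff_mul_le hm, Nat.div_lt_iff_lt_mul (by omega), mul_comm j]
  omega

/-- For fixed `j` there are exactly `m - 1 - ⌊mj/p⌋` indices `k` with `j ≤ ⌊kp/m⌋`. -/
theorem Finset.sum_Icc_sum_Icc_div_add_sum_div_nsmul {M : Type*} [AddCommMonoid M] {m p : ℕ}
    (hmp : m.Coprime p) (g : ℕ → M) :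
    ∑ k ∈ Icc 1 (m - 1), ∑ j ∈ Icc 1 (k * p / m), g j +
        ∑ j ∈ Icc 1 (p - 1), (m * j / p) • g j =
      (m - 1) • ∑ j ∈ Icc 1 (p - 1), g j := by
  have hswap : ∀ k j, k ∈ Icc 1 (m - 1) ∧ j ∈ Icc 1 (k * p / m) ↔
      k ∈ Icc (m * j / p + 1) (m - 1) ∧ j ∈ Icc 1 (p - 1) := by
    intro k j
    constructor
    · rintro ⟨hk, hj⟩
      have hkp := Nat.mul_div_le_sub_one_of_coprime hmp hk
      simp only [mem_Icc] at hk hj ⊢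
      have := (Nat.le_mul_div_iff_mul_div_lt hmp hj.1 (by omega)).1 hj.2
      omega
    · simp only [mem_Icc]
      rintro ⟨⟨hk, hkm⟩, hj, hjp⟩
      exact ⟨⟨(Nat.le_add_left 1 _).trans hk, hkm⟩, hj,
        (Nat.le_mul_div_iff_mul_div_lt hmp hj (by omega)).2 hk⟩
  rw [sum_comm' hswap, smul_sum, ← sum_add_distrib]
  refine sum_congr rfl fun j hj => ?_
  have hjm := Nat.mul_div_le_sub_one_of_coprime hmp.symm hj
  rw [mul_comm] at hjm
  rw [sum_const, Nat.card_Icc, ← add_nsmul]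
  congr 1
  omega

theorem Finset.sum_Icc_id_eq_choose_two (a : ℕ) : ∑ j ∈ Icc 1 a, j = (a + 1).choose 2 := by
  induction a with
  | zero => rfl
  | succ a ih =>
    rw [sum_Icc_succ_top (by omega), ih, Nat.choose_succ_succ' (a + 1), Nat.choose_one_right,
      add_comm]

section SquareZero

variable {R : Type*} [CommRing R] {ε : R}

theorem prod_add_mul_of_mul_self_eq_zero (hε : ε * ε = 0) {ι : Type*} (s : Finset ι)
    (x y w : ι → R) (hxw : ∀ i ∈ s, x i * w i = 1) :
    ∏ i ∈ s, (x i + ε * y i) = (∏ i ∈ s, x i) * (1 + ε * ∑ i ∈ s, y i * w i) := by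
  classical
  induction s using Finset.cons_induction with
  | empty => simp
  | cons a s ha ih =>
    rw [prod_cons, prod_cons, sum_cons, ih fun i hi => hxw i (mem_cons_of_mem hi)]
    linear_combination ((∏ i ∈ s, x i) * y a * ∑ i ∈ s, y i * w i) * hε -
      ((∏ i ∈ s, x i) * ε * y a) * hxw a (mem_cons_self a s)

theorem prod_one_sub_mul_of_mul_self_eq_zero (hε : ε * ε = 0) {ι : Type*} (s : Finset ι)
    (y : ι → R) : ∏ i ∈ s, (1 - ε * y i) = 1 - ε * ∑ i ∈ s, y i := by
  simpa [sub_eq_add_neg, ← mul_neg] using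
    prod_add_mul_of_mul_self_eq_zero hε s 1 (-y) 1 (by simp)

theorem one_sub_pow_of_mul_self_eq_zero (hε : ε * ε = 0) (b : ℕ) :
    (1 - ε) ^ b = 1 - b * ε := by
  simpa [mul_comm ε] using prod_one_sub_mul_of_mul_self_eq_zero hε (range b) 1

end SquareZero

section qPochhammer

variable {R : Type*} [CommRing R]

/-- `(x; x)_n`. -/
def qPochhammer (x : R) (n : ℕ) : R := ∏ j ∈ Icc 1 n, (1 - x ^ j)

theorem map_qPochhammer {S : Type*} [CommRing S] (φ : R →+* S) (x : R) (n : ℕ) :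
    φ (qPochhammer x n) = qPochhammer (φ x) n := by
  simp [qPochhammer, map_prod]

theorem qPochhammer_zero (x : R) : qPochhammer x 0 = 1 := rfl

theorem qPochhammer_succ (x : R) (n : ℕ) :
    qPochhammer x (n + 1) = qPochhammer x n * (1 - x ^ (n + 1)) :=
  prod_Icc_succ_top (by omega) _

theorem qPochhammer_mul_qPochhammer_dvd (x : R) {n k : ℕ} (hk : k ≤ n) :
    qPochhammer x k * qPochhammer x (n - k) ∣ qPochhammer x n := by
  induction n generalizing k with
  | zero => simp [Nat.le_zero.1 hk, qPochhammer_zero]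
  | succ n ih =>
    rcases hk.eq_or_lt with rfl | hlt
    · simp [qPochhammer_zero]
    obtain _ | k' := k
    · simp [qPochhammer_zero]
    obtain ⟨B₁, hB₁⟩ := ih (k := k') (by omega)
    obtain ⟨B₂, hB₂⟩ := ih (k := k' + 1) (by omega)
    have hn : n - k' = n - (k' + 1) + 1 := by omega
    refine ⟨B₁ + x ^ (k' + 1) * B₂, ?_⟩
    rw [hn, qPochhammer_succ x (n - (k' + 1))] at hB₁
    rw [qPochhammer_succ x k'] at hB₂
    rw [Nat.add_sub_add_right, hn, qPochhammer_succ x (n - (k' + 1)), qPochhammer_succ x k',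
      qPochhammer_succ x n]
    have hsplit : x ^ (n + 1) = x ^ (k' + 1) * x ^ (n - (k' + 1) + 1) := by
      rw [← pow_add]; congr 1; omega
    rw [hsplit]
    linear_combination (1 - x ^ (k' + 1)) * hB₁ +
      x ^ (k' + 1) * (1 - x ^ (n - (k' + 1) + 1)) * hB₂

theorem qPochhammer_dvd_qPochhammer_pow (x : R) (m n : ℕ) :
    qPochhammer x n ∣ qPochhammer (x ^ m) n :=
  prod_dvd_prod_of_dvd _ _ fun j _ => by
    rw [← pow_mul, mul_comm, pow_mul]; exact one_sub_dvd_one_sub_pow _ _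

theorem qPochhammer_eq_mul_prod_reflect (x : R) {n a : ℕ} (ha : a ≤ n) :
    qPochhammer x n = qPochhammer x (n - a) * ∏ j ∈ Icc 1 a, (1 - x ^ (n + 1 - j)) := by
  induction a with
  | zero => simp
  | succ a ih =>
    have hn : n - a = n - (a + 1) + 1 := by omega
    rw [ih (by omega), hn, qPochhammer_succ, prod_Icc_succ_top (by omega), ← hn,
      show n + 1 - (a + 1) = n - a by omega]
    ring

theorem exists_forall_mul_qPochhammer_eq (x : R) {s : Finset ℕ} {a : ℕ → ℕ} {n : ℕ}
    (ha : ∀ k ∈ s, a k ≤ n) :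
    ∃ B : ℕ → R, ∀ k ∈ s,
      B k * qPochhammer x (a k) * qPochhammer x (n - a k) = qPochhammer x n := by
  have hB : ∀ k, ∃ B : R, k ∈ s →
      B * qPochhammer x (a k) * qPochhammer x (n - a k) = qPochhammer x n := fun k => by
    by_cases hk : k ∈ s
    · obtain ⟨B, hB⟩ := qPochhammer_mul_qPochhammer_dvd x (ha k hk)
      exact ⟨B, fun _ => by rw [hB]; ring⟩
    · exact ⟨0, fun h => absurd h hk⟩
  choose B hB using hB
  exact ⟨B, hB⟩

end qPochhammer

/-- A primitive `p`-th root of unity up to the square-zero error `1 - ω ^ p`, modelled on `q` in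
`ℚ[q] ⧸ ([p]_q ^ 2)`. -/
structure IsPrimitiveRootModSq {R : Type*} [CommRing R] (ω : R) (p : ℕ) : Prop where
  sq_one_sub_pow : (1 - ω ^ p) ^ 2 = 0
  isUnit_one_sub_pow {t : ℕ} : ¬ p ∣ t → IsUnit (1 - ω ^ t)

namespace IsPrimitiveRootModSq

variable {R : Type*} [CommRing R] {ω : R} {p m : ℕ}

local notation "ε" => (1 - ω ^ p)

theorem mul_self_eq_zero (hω : IsPrimitiveRootModSq ω p) : ε * ε = 0 := by
  rw [← sq]; exact hω.sq_one_sub_pow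

theorem pow_mul_eq (hω : IsPrimitiveRootModSq ω p) (b : ℕ) : ω ^ (p * b) = 1 - b * ε := by
  rw [pow_mul, ← one_sub_pow_of_mul_self_eq_zero hω.mul_self_eq_zero, sub_sub_cancel]

theorem one_sub_pow_eq (hω : IsPrimitiveRootModSq ω p) (n : ℕ) :
    1 - ω ^ n = (1 - ω ^ (n % p)) + ε * ((n / p : ℕ) * ω ^ (n % p)) := by
  conv_lhs => rw [← Nat.div_add_mod n p, pow_add, hω.pow_mul_eq]
  ring

theorem mul_inverse_cancel (hω : IsPrimitiveRootModSq ω p) {t : ℕ} (ht : ¬ p ∣ t) :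
    (1 - ω ^ t) * Ring.inverse (1 - ω ^ t) = 1 :=
  Ring.mul_inverse_cancel _ (hω.isUnit_one_sub_pow ht)

theorem mul_inverse_mod (hω : IsPrimitiveRootModSq ω p) {n : ℕ} (hn : ¬ p ∣ n) :
    ε * Ring.inverse (1 - ω ^ n) = ε * Ring.inverse (1 - ω ^ (n % p)) := by
  have hr : ¬ p ∣ n % p := fun h => hn ((Nat.dvd_mod_iff dvd_rfl).1 h)
  set a := Ring.inverse (1 - ω ^ n)
  set b := Ring.inverse (1 - ω ^ (n % p))
  linear_combination (ε * b) * hω.mul_inverse_cancel hn - (ε * a) * hω.mul_inverse_cancel hr -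
    (ε * a * b) * hω.one_sub_pow_eq n -
    (a * b * (n / p : ℕ) * ω ^ (n % p)) * hω.mul_self_eq_zero

/-- The analogue of `1 / (1 - ζ ^ c) + 1 / (1 - ζ ^ (-c)) = 1`. -/
theorem mul_inverse_add_inverse_sub (hω : IsPrimitiveRootModSq ω p) {c : ℕ} (hc : ¬ p ∣ c)
    (hcp : c ≤ p) : ε * (Ring.inverse (1 - ω ^ c) + Ring.inverse (1 - ω ^ (p - c))) = ε := by
  have hc' : ¬ p ∣ p - c := fun h => hc ((Nat.dvd_sub_iff_right hcp dvd_rfl).1 h)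
  have hpow : ω ^ c * ω ^ (p - c) = 1 - ε := by rw [← pow_add, Nat.add_sub_cancel' hcp]; ring
  set u := Ring.inverse (1 - ω ^ c)
  set v := Ring.inverse (1 - ω ^ (p - c))
  have hu := hω.mul_inverse_cancel hc
  have hv := hω.mul_inverse_cancel hc'
  linear_combination (ε - ε * v) * hu + (ε * (1 - ω ^ c) * u - ε * u) * hv -
    (ε * u * v) * hpow + (u * v) * hω.mul_self_eq_zero

theorem two_mul_sum_inverse (hω : IsPrimitiveRootModSq ω p) :
    2 * (ε * ∑ c ∈ Icc 1 (p - 1), Ring.inverse (1 - ω ^ c)) = (p - 1 : ℕ) * ε := by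
  have := two_nsmul_sum_Icc_of_add_reflect (n := p) (f := fun c => ε * Ring.inverse (1 - ω ^ c))
    (s := ε) fun c hc => by
      simp only [mem_Icc] at hc
      rw [← mul_add]
      exact hω.mul_inverse_add_inverse_sub (Nat.not_dvd_of_pos_of_lt hc.1 (by omega)) (by omega)
  rwa [nsmul_eq_mul, nsmul_eq_mul, Nat.cast_ofNat, ← mul_sum] at this

theorem isUnit_qPochhammer (hω : IsPrimitiveRootModSq ω p) (hmp : m.Coprime p) {a : ℕ}
    (ha : a ≤ p - 1) : IsUnit (qPochhammer (ω ^ m) a) := by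
  refine IsUnit.prod_iff.2 fun j hj => ?_
  simp only [mem_Icc] at hj
  rw [← pow_mul]
  exact hω.isUnit_one_sub_pow (hmp.not_dvd_mul_of_pos_of_lt (by omega) (by omega))

theorem pow_choose_mul_qPochhammer (hω : IsPrimitiveRootModSq ω p) (hmp : m.Coprime p) {a : ℕ}
    (ha : a ≤ p - 1) :
    ω ^ (m * (a + 1).choose 2) * qPochhammer (ω ^ m) (p - 1) =
      (-1) ^ a * qPochhammer (ω ^ m) a * qPochhammer (ω ^ m) (p - 1 - a) *
        (1 - ε * (m * ∑ j ∈ Icc 1 a, Ring.inverse (1 - ω ^ (m * j)))) := by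
  have hinv : ∀ j ∈ Icc 1 a, -(1 - ω ^ (m * j)) * -Ring.inverse (1 - ω ^ (m * j)) = 1 := by
    intro j hj
    simp only [mem_Icc] at hj
    rw [neg_mul_neg]
    exact hω.mul_inverse_cancel (hmp.not_dvd_mul_of_pos_of_lt (by omega) (by omega))
  have hterm : ∀ j ∈ Icc 1 a, ω ^ (m * j) * (1 - (ω ^ m) ^ (p - 1 + 1 - j)) =
      -(1 - ω ^ (m * j)) + ε * m := by
    intro j hj
    simp only [mem_Icc] at hj
    have hexp : m * j + m * (p - 1 + 1 - j) = p * m := by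
      rw [← mul_add, mul_comm]; congr 1; omega
    rw [← pow_mul, mul_sub, mul_one, ← pow_add, hexp, hω.pow_mul_eq]
    ring
  calc ω ^ (m * (a + 1).choose 2) * qPochhammer (ω ^ m) (p - 1)
      = qPochhammer (ω ^ m) (p - 1 - a) *
          ∏ j ∈ Icc 1 a, ω ^ (m * j) * (1 - (ω ^ m) ^ (p - 1 + 1 - j)) := by
        rw [qPochhammer_eq_mul_prod_reflect _ ha, ← sum_Icc_id_eq_choose_two, mul_sum,
          ← prod_pow_eq_pow_sum, prod_mul_distrib]
        ring
    _ = qPochhammer (ω ^ m) (p - 1 - a) * ∏ j ∈ Icc 1 a, (-(1 - ω ^ (m * j)) + ε * m) := by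
        rw [prod_congr rfl hterm]
    _ = _ := by
        rw [prod_add_mul_of_mul_self_eq_zero hω.mul_self_eq_zero _ _ _ _ hinv, prod_neg,
          Nat.card_Icc, Nat.add_sub_cancel]
        simp only [qPochhammer, ← pow_mul, mul_neg, sum_neg_distrib, ← mul_sum]
        ring

theorem pow_choose_mul_eq_of_mul_qPochhammer (hω : IsPrimitiveRootModSq ω p)
    (hmp : m.Coprime p) {a : ℕ} (ha : a ≤ p - 1) {b : R}
    (hb : b * qPochhammer (ω ^ m) a * qPochhammer (ω ^ m) (p - 1 - a) =
      qPochhammer (ω ^ m) (p - 1)) :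
    ω ^ (m * (a + 1).choose 2) * b =
      (-1) ^ a * (1 - ε * (m * ∑ j ∈ Icc 1 a, Ring.inverse (1 - ω ^ (m * j)))) := by
  have hu := (hω.isUnit_qPochhammer hmp ha).mul (hω.isUnit_qPochhammer hmp (Nat.sub_le _ a))
  apply hu.mul_left_cancel
  linear_combination ω ^ (m * (a + 1).choose 2) * hb + hω.pow_choose_mul_qPochhammer hmp ha

theorem eq_of_mul_qPochhammer (hω : IsPrimitiveRootModSq ω p) (hmp : m.Coprime p) {f : R}
    (hf : f * qPochhammer ω (p - 1) = qPochhammer (ω ^ m) (p - 1)) :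
    f = 1 + ε * ∑ j ∈ Icc 1 (p - 1),
      (m * j / p) • (Ring.inverse (1 - ω ^ (m * j)) - 1) := by
  have hmod : ∀ j ∈ Icc 1 (p - 1), ¬ p ∣ m * j % p := fun j hj h => by
    simp only [mem_Icc] at hj
    exact hmp.not_dvd_mul_of_pos_of_lt (by omega) (by omega) ((Nat.dvd_mod_iff dvd_rfl).1 h)
  have hterm : ∀ j ∈ Icc 1 (p - 1), ((m * j / p : ℕ) : R) * ω ^ (m * j % p) *
      Ring.inverse (1 - ω ^ (m * j % p)) = ((m * j / p : ℕ) : R) *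
      (Ring.inverse (1 - ω ^ (m * j % p)) - 1) := fun j hj => by
    linear_combination (-((m * j / p : ℕ) : R)) * hω.mul_inverse_cancel (hmod j hj)
  have hreduce : ∀ j ∈ Icc 1 (p - 1), ε * (((m * j / p : ℕ) : R) *
      (Ring.inverse (1 - ω ^ (m * j % p)) - 1)) =
      ε * (m * j / p) • (Ring.inverse (1 - ω ^ (m * j)) - 1) := fun j hj => by
    simp only [mem_Icc] at hj
    rw [nsmul_eq_mul]
    linear_combination (-((m * j / p : ℕ) : R)) *
      hω.mul_inverse_mod (n := m * j) (hmp.not_dvd_mul_of_pos_of_lt (by omega) (by omega))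
  have hprod : qPochhammer (ω ^ m) (p - 1) = qPochhammer ω (p - 1) *
      (1 + ε * ∑ j ∈ Icc 1 (p - 1),
        (m * j / p) • (Ring.inverse (1 - ω ^ (m * j)) - 1)) := by
    simp only [qPochhammer, ← pow_mul]
    rw [prod_congr rfl fun j _ => hω.one_sub_pow_eq (m * j),
      prod_add_mul_of_mul_self_eq_zero hω.mul_self_eq_zero _ _ _ _
        fun j hj => hω.mul_inverse_cancel (hmod j hj),
      prod_Icc_mul_mod hmp fun c => 1 - ω ^ c, sum_congr rfl hterm, mul_sum, mul_sum,
      sum_congr rfl hreduce]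
  have hu : IsUnit (qPochhammer ω (p - 1)) := by
    simpa using hω.isUnit_qPochhammer (m := 1) (Nat.coprime_one_left p) le_rfl
  exact hu.mul_left_cancel (by rw [mul_comm, hf, hprod])

theorem granville_identity (hω : IsPrimitiveRootModSq ω p) (hmp : m.Coprime p)
    (h2 : IsUnit (2 : R)) {f : R} {b : ℕ → R}
    (hf : f * qPochhammer ω (p - 1) = qPochhammer (ω ^ m) (p - 1))
    (hb : ∀ k ∈ Icc 1 (m - 1), b k * qPochhammer (ω ^ m) (k * p / m) *
      qPochhammer (ω ^ m) (p - 1 - k * p / m) = qPochhammer (ω ^ m) (p - 1)) :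
    (-1) ^ ((p - 1) * (m - 1) / 2) * ω ^ (m * ∑ k ∈ Icc 1 (m - 1), (k * p / m + 1).choose 2) *
      ∏ k ∈ Icc 1 (m - 1), b k = m * f - m + 1 := by
  set g : ℕ → R := fun j => Ring.inverse (1 - ω ^ (m * j))
  have hfloor : ∀ k ∈ Icc 1 (m - 1), k * p / m ≤ p - 1 := fun k hk =>
    Nat.mul_div_le_sub_one_of_coprime hmp hk
  have hexp : ∑ k ∈ Icc 1 (m - 1), k * p / m = (p - 1) * (m - 1) / 2 := by
    have := Nat.two_mul_sum_Icc_mul_div_of_coprime hmp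
    rw [mul_comm (m - 1)] at this
    omega
  have hlhs : ω ^ (m * ∑ k ∈ Icc 1 (m - 1), (k * p / m + 1).choose 2) *
      ∏ k ∈ Icc 1 (m - 1), b k =
      (-1) ^ ((p - 1) * (m - 1) / 2) *
        (1 - ε * ∑ k ∈ Icc 1 (m - 1), m * ∑ j ∈ Icc 1 (k * p / m), g j) := by
    rw [mul_sum, ← prod_pow_eq_pow_sum, ← prod_mul_distrib, prod_congr rfl fun k hk =>
      hω.pow_choose_mul_eq_of_mul_qPochhammer hmp (hfloor k hk) (hb k hk), prod_mul_distrib,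
      prod_pow_eq_pow_sum, hexp, prod_one_sub_mul_of_mul_self_eq_zero hω.mul_self_eq_zero]
  have hF := hω.eq_of_mul_qPochhammer hmp hf
  have hcount := sum_Icc_sum_Icc_div_add_sum_div_nsmul hmp g
  have hreindex : ε * ∑ j ∈ Icc 1 (p - 1), g j =
      ε * ∑ c ∈ Icc 1 (p - 1), Ring.inverse (1 - ω ^ c) := by
    rw [mul_sum, mul_sum, ← sum_Icc_mul_mod hmp fun c => ε * Ring.inverse (1 - ω ^ c)]
    refine sum_congr rfl fun j hj => ?_
    simp only [mem_Icc] at hj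
    exact hω.mul_inverse_mod (hmp.not_dvd_mul_of_pos_of_lt (by omega) (by omega))
  have htwo := hω.two_mul_sum_inverse
  have hnat :
      2 * ((∑ j ∈ Icc 1 (p - 1), m * j / p : ℕ) : R) = (p - 1 : ℕ) * (m - 1 : ℕ) := by
    have := Nat.two_mul_sum_Icc_mul_div_of_coprime hmp.symm
    simp only [mul_comm _ m] at this
    exact_mod_cast congrArg (Nat.cast : ℕ → R) this
  have hsign : (-1 : R) ^ ((p - 1) * (m - 1) / 2) * (-1) ^ ((p - 1) * (m - 1) / 2) = 1 := by
    rw [← mul_pow]; norm_num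
  simp only [smul_sub, sum_sub_distrib, nsmul_eq_mul, mul_one, ← Nat.cast_sum] at hF hcount
  rw [mul_assoc, hlhs, hF, ← mul_sum]
  -- `∑ 1 / (1 - ω ^ c)` is only known after doubling, hence the cancellation of `2`.
  apply h2.mul_left_cancel
  linear_combination
    (2 * (1 - ε * (m * ∑ k ∈ Icc 1 (m - 1), ∑ j ∈ Icc 1 (k * p / m), g j))) * hsign -
    2 * m * ε * hcount - 2 * m * (m - 1 : ℕ) * hreindex - m * (m - 1 : ℕ) * htwo +
    m * ε * hnat

end IsPrimitiveRootModSq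

theorem Polynomial.dvd_of_cyclotomic_dvd_one_sub_X_pow {n t : ℕ} (hn : 0 < n)
    (h : cyclotomic n ℚ ∣ 1 - X ^ t) : n ∣ t := by
  have hζ := Complex.isPrimitiveRoot_exp n hn.ne'
  have hroot := (hζ.isRoot_cyclotomic hn).dvd (by simpa using map_dvd (algebraMap ℚ ℂ) h)
  simp only [IsRoot, eval_sub, eval_one, eval_pow, eval_X, sub_eq_zero] at hroot
  exact hζ.dvd_of_pow_eq_one t hroot.symm

theorem isPrimitiveRootModSq_mk_X {p : ℕ} (hp : p.Prime) :
    IsPrimitiveRootModSq (Ideal.Quotient.mk (Ideal.span {cyclotomic p ℚ} ^ 2) X) p where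
  sq_one_sub_pow := by
    have : Fact p.Prime := ⟨hp⟩
    rw [← map_pow, ← map_one (Ideal.Quotient.mk _), ← map_sub, ← map_pow,
      Ideal.Quotient.eq_zero_iff_mem]
    refine Ideal.pow_mem_pow (Ideal.mem_span_singleton.2 ⟨1 - X, ?_⟩) 2
    linear_combination cyclotomic_prime_mul_X_sub_one ℚ p
  isUnit_one_sub_pow {t} ht := by
    have := PrincipalIdealRing.isMaximal_of_irreducible (cyclotomic.irreducible_rat hp.pos)
    simpa using Ideal.Quotient.isUnit_mk_pow_of_notMem _ (n := 2) (x := (1 - X ^ t : ℚ[X]))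
      fun h => ht (dvd_of_cyclotomic_dvd_one_sub_X_pow hp.pos (Ideal.mem_span_singleton.1 h))

theorem geom_sum_X_sq_dvd_iff {p : ℕ} (hp : p.Prime) (G : ℤ[X]) :
    (∑ i ∈ range p, (X : ℤ[X]) ^ i) ^ 2 ∣ G ↔
      ((Ideal.Quotient.mk (Ideal.span {cyclotomic p ℚ} ^ 2)).comp
        (mapRingHom (Int.castRingHom ℚ))) G = 0 := by
  have : Fact p.Prime := ⟨hp⟩
  have hmonic : ((∑ i ∈ range p, (X : ℤ[X]) ^ i) ^ 2).Monic := by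
    rw [← cyclotomic_prime]; exact (cyclotomic.monic p ℤ).pow 2
  rw [← map_dvd_map (Int.castRingHom ℚ) Int.cast_injective hmonic, ← Ideal.mem_span_singleton,
    Polynomial.map_pow, Polynomial.map_sum]
  simp only [Polynomial.map_pow, map_X]
  rw [← cyclotomic_prime, ← Ideal.span_singleton_pow, ← Ideal.Quotient.eq_zero_iff_mem]
  rfl

theorem q_granville_general (p m : ℕ) (hp : p.Prime) (hpm : ¬ p ∣ m) :
    ∃ f : ℤ[X], ∃ B : ℕ → ℤ[X],
      f * (∏ j ∈ Finset.Icc 1 (p-1), (1 - X^j)) = (∏ j ∈ Finset.Icc 1 (p-1), (1 - X^(m*j)))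
      ∧ (∀ k ∈ Finset.Icc 1 (m-1),
          B k * (∏ j ∈ Finset.Icc 1 (k*p/m), (1 - X^(m*j)))
              * (∏ j ∈ Finset.Icc 1 ((p-1) - k*p/m), (1 - X^(m*j)))
            = (∏ j ∈ Finset.Icc 1 (p-1), (1 - X^(m*j))))
      ∧ (∑ i ∈ Finset.range p, (X : ℤ[X])^i)^2 ∣
          ((-1)^((p-1)*(m-1)/2)
              * X^(m * ∑ k ∈ Finset.Icc 1 (m-1), Nat.choose (k*p/m + 1) 2)
              * (∏ k ∈ Finset.Icc 1 (m-1), B k)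
            - ((m : ℤ[X]) * f - (m : ℤ[X]) + 1)) := by
  have hmp : m.Coprime p := Nat.coprime_comm.1 ((hp.coprime_iff_not_dvd).2 hpm)
  obtain ⟨f, hf⟩ := qPochhammer_dvd_qPochhammer_pow (X : ℤ[X]) m (p - 1)
  rw [mul_comm] at hf
  obtain ⟨B, hB⟩ := exists_forall_mul_qPochhammer_eq (X ^ m : ℤ[X]) fun k hk =>
    Nat.mul_div_le_sub_one_of_coprime hmp hk
  refine ⟨f, B, by simpa only [qPochhammer, ← pow_mul] using hf.symm,
    fun k hk => by simpa only [qPochhammer, ← pow_mul] using hB k hk, ?_⟩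
  rw [geom_sum_X_sq_dvd_iff hp]
  set I := Ideal.span {cyclotomic p ℚ}
  set ρ := (Ideal.Quotient.mk (I ^ 2)).comp (mapRingHom (Int.castRingHom ℚ))
  have hρX : ρ X = Ideal.Quotient.mk (I ^ 2) X := by simp [ρ]
  have h2 : IsUnit (2 : ℚ[X] ⧸ I ^ 2) := by
    simpa [map_ofNat] using (isUnit_of_invertible (2 : ℚ)).map (algebraMap ℚ (ℚ[X] ⧸ I ^ 2))
  have key := (isPrimitiveRootModSq_mk_X hp).granville_identity hmp h2 (f := ρ f) (b := ρ ∘ B)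
    (by simpa [map_qPochhammer, hρX] using congrArg ρ hf.symm)
    (fun k hk => by simpa [map_qPochhammer, hρX] using congrArg ρ (hB k hk))
  simpa [hρX, sub_eq_zero] using key

/-- `q`-analogue of Granville's congruence: for a prime `p ≥ 5` and `m ≥ 2` with `p ∤ m`,
with `f = (q^m;q^m)_{p-1}/(q;q)_{p-1} ∈ ℤ[q]` and `B k = C(p-1, ⌊kp/m⌋)_{q^m}` the Gaussian
binomial coefficients in the variable `q^m` (characterized by their defining equations),
and `M = m ∑_{k=1}^{m-1} C(⌊kp/m⌋+1, 2)`, one has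
`(-1)^((p-1)(m-1)/2) q^M ∏_{k=1}^{m-1} B k ≡ m·f - m + 1 (mod [p]_q²)` in `ℤ[q]`. -/
theorem q_granville (p m : ℕ) (hp : p.Prime) (h5 : 5 ≤ p) (hm : 2 ≤ m) (hpm : ¬ p ∣ m) :
    ∃ f : ℤ[X], ∃ B : ℕ → ℤ[X],
      f * (∏ j ∈ Finset.Icc 1 (p-1), (1 - X^j)) = (∏ j ∈ Finset.Icc 1 (p-1), (1 - X^(m*j)))
      ∧ (∀ k ∈ Finset.Icc 1 (m-1),
          B k * (∏ j ∈ Finset.Icc 1 (k*p/m), (1 - X^(m*j)))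
              * (∏ j ∈ Finset.Icc 1 ((p-1) - k*p/m), (1 - X^(m*j)))
            = (∏ j ∈ Finset.Icc 1 (p-1), (1 - X^(m*j))))
      ∧ (∑ i ∈ Finset.range p, (X : ℤ[X])^i)^2 ∣
          ((-1)^((p-1)*(m-1)/2)
              * X^(m * ∑ k ∈ Finset.Icc 1 (m-1), Nat.choose (k*p/m + 1) 2)
              * (∏ k ∈ Finset.Icc 1 (m-1), B k)
            - ((m : ℤ[X]) * f - (m : ℤ[X]) + 1)) :=
  q_granville_general p m hp hpm
end

section
/- For every prime p > 3: ∑_{j=1}^{p-1} q^j/[j]_q² ≡ -((p²-1)/12)(1-q)² (mod [p]_q), in the localization of ℚ[q] at [p]_q. -/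
open Polynomial Finset

/-- `[n]_q = 1 + q + ⋯ + q^(n-1)` as a polynomial in `ℚ[q]`. -/
noncomputable def qnum (n : ℕ) : ℚ[X] := ∑ i ∈ Finset.range n, X ^ i

/-- The embedding of `ℚ[q]` into the field of rational functions `ℚ(q)`. -/
noncomputable def Φ : ℚ[X] →+* RatFunc ℚ := algebraMap _ _

/-- `ModPow p k x` says that `x` lies in the ideal generated by `[p]_q ^ k` in the
localization of `ℚ[q]` at the polynomials coprime to the irreducible polynomial
`[p]_q`: that is, `x = [p]_q ^ k · a / b` with `[p]_q ∤ b`. -/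
def ModPow (p k : ℕ) (x : RatFunc ℚ) : Prop :=
  ∃ a b : ℚ[X], ¬ (qnum p ∣ b) ∧ x * Φ b = Φ (qnum p ^ k * a)

/-!
Reduce modulo `[p]_q`, the minimal polynomial of a primitive `p`-th root of unity `ζ`: a rational
function with denominator prime to `[p]_q` is divisible by `[p]_q` exactly when its value at `ζ`
vanishes. Since `[j]_ζ = (1 - ζ^j)/(1 - ζ)`, the claim becomes
`∑_{j=1}^{p-1} ζ^j/(1 - ζ^j)^2 = -(p^2 - 1)/12`. Writing `1/(1 - ω) = -(1/p) ∑_{k<p} (k+1) ω^k`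
for `ω^p = 1 ≠ ω`, the left side becomes a double sum of powers of `ζ`, which orthogonality of the
characters `j ↦ ζ^{jm}` reduces to the elementary sums `∑ (k+1)` and `∑ (k+1)(p-k)`. Primality of
`p > 3` gives `12 ∣ p^2 - 1`, and makes `[p]_q` the `p`-th cyclotomic polynomial.
-/

section RootsOfUnity

variable {K : Type*} [Field K]

lemma sum_range_pow_eq_zero {ω : K} {n : ℕ} (hω : ω ^ n = 1) (h1 : ω ≠ 1) :
    ∑ k ∈ range n, ω ^ k = 0 := by
  rw [geom_sum_eq h1, hω, sub_self, zero_div]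

lemma IsPrimitiveRoot.sum_range_pow_pow {ζ : K} {n : ℕ} (hζ : IsPrimitiveRoot ζ n) (m : ℕ) :
    ∑ j ∈ range n, (ζ ^ m) ^ j = if n ∣ m then (n : K) else 0 := by
  split_ifs with h
  · simp [(hζ.pow_eq_one_iff_dvd m).mpr h]
  · refine sum_range_pow_eq_zero ?_ (mt (hζ.pow_eq_one_iff_dvd m).mp h)
    rw [← pow_mul, mul_comm, pow_mul, hζ.pow_eq_one, one_pow]

lemma one_sub_mul_sum_range_succ_mul_pow {R : Type*} [CommRing R] (x : R) (n : ℕ) :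
    (1 - x) * ∑ k ∈ range n, ((k : R) + 1) * x ^ k = ∑ k ∈ range n, x ^ k - n * x ^ n := by
  induction n with
  | zero => simp
  | succ n ih => rw [sum_range_succ, sum_range_succ, mul_add, ih]; push_cast; ring

lemma div_one_sub_sq_eq {ω : K} {n : ℕ} (hω : ω ^ n = 1) (h1 : ω ≠ 1) (hn : (n : K) ≠ 0) :
    ω / (1 - ω) ^ 2 = ω * (∑ k ∈ range n, ((k : K) + 1) * ω ^ k) ^ 2 / n ^ 2 := by
  have h := one_sub_mul_sum_range_succ_mul_pow ω n
  rw [sum_range_pow_eq_zero hω h1, hω] at h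
  have h1' : 1 - ω ≠ 0 := sub_ne_zero.mpr h1.symm
  rw [div_eq_div_iff (pow_ne_zero 2 h1') (pow_ne_zero 2 hn)]
  linear_combination (-ω * ((1 - ω) * ∑ k ∈ range n, ((k : K) + 1) * ω ^ k - n)) * h

lemma sum_range_ite_dvd_add_succ {M : Type*} [AddCommMonoid M] {n k : ℕ} (hk : k < n)
    (f : ℕ → M) : ∑ l ∈ range n, (if n ∣ k + l + 1 then f l else 0) = f (n - 1 - k) := by
  rw [sum_eq_single_of_mem (n - 1 - k) (mem_range.mpr (by omega)), if_pos ⟨1, by omega⟩]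
  intro l hl hlk
  rw [if_neg]
  intro hdvd
  have := Nat.eq_of_dvd_of_lt_two_mul (by omega) hdvd (by rw [mem_range] at hl; omega)
  omega

lemma sum_range_eq_add_sum_Icc {M : Type*} [AddCommMonoid M] {n : ℕ} (hn : n ≠ 0)
    (f : ℕ → M) : ∑ j ∈ range n, f j = f 0 + ∑ j ∈ Icc 1 (n - 1), f j := by
  rw [show range n = insert 0 (Icc 1 (n - 1)) by ext; simp; omega, sum_insert (by simp)]

lemma two_mul_sum_range_succ {R : Type*} [CommRing R] (n : ℕ) :
    2 * ∑ k ∈ range n, ((k : R) + 1) = n * (n + 1) := by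
  induction n with
  | zero => simp
  | succ n ih => rw [sum_range_succ, mul_add, ih]; push_cast; ring

lemma six_mul_sum_range_succ_mul_sub {R : Type*} [CommRing R] (n : ℕ) :
    6 * ∑ k ∈ range n, ((k : R) + 1) * (n - k) = n * (n + 1) * (n + 2) := by
  induction n with
  | zero => simp
  | succ n ih =>
    have hsplit : ∑ k ∈ range (n + 1), ((k : R) + 1) * ((n + 1 : ℕ) - k)
        = ∑ k ∈ range (n + 1), ((k : R) + 1) * (n - k) + ∑ k ∈ range (n + 1), ((k : R) + 1) := by
      rw [← sum_add_distrib]; exact sum_congr rfl fun k _ => by push_cast; ring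
    rw [hsplit, mul_add, sum_range_succ, mul_add, ih]
    have h2 := two_mul_sum_range_succ (R := R) (n + 1)
    push_cast at h2 ⊢
    linear_combination 3 * h2

lemma IsPrimitiveRoot.sum_range_pow_mul_sq {ζ : K} {n : ℕ} (hζ : IsPrimitiveRoot ζ n) :
    ∑ j ∈ range n, ζ ^ j * (∑ k ∈ range n, ((k : K) + 1) * (ζ ^ j) ^ k) ^ 2
      = n * ∑ k ∈ range n, ((k : K) + 1) * (n - k) := by
  calc ∑ j ∈ range n, ζ ^ j * (∑ k ∈ range n, ((k : K) + 1) * (ζ ^ j) ^ k) ^ 2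
      = ∑ j ∈ range n, ∑ k ∈ range n, ∑ l ∈ range n,
          ((k : K) + 1) * ((l : K) + 1) * (ζ ^ (k + l + 1)) ^ j := by
        refine sum_congr rfl fun j _ => ?_
        rw [sq, sum_mul_sum, mul_sum]
        refine sum_congr rfl fun k _ => ?_
        rw [mul_sum]
        refine sum_congr rfl fun l _ => ?_
        ring
    _ = ∑ k ∈ range n, ∑ l ∈ range n,
          ((k : K) + 1) * ((l : K) + 1) * ∑ j ∈ range n, (ζ ^ (k + l + 1)) ^ j := by
        rw [sum_comm]
        refine sum_congr rfl fun k _ => ?_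
        rw [sum_comm]
        simp only [mul_sum]
    _ = ∑ k ∈ range n, ∑ l ∈ range n,
          (if n ∣ k + l + 1 then n * (((k : K) + 1) * ((l : K) + 1)) else 0) := by
        simp only [hζ.sum_range_pow_pow, mul_ite, mul_zero, mul_comm (n : K)]
    _ = ∑ k ∈ range n, n * (((k : K) + 1) * (((n - 1 - k : ℕ) : K) + 1)) :=
        sum_congr rfl fun k hk => sum_range_ite_dvd_add_succ (mem_range.mp hk) _
    _ = n * ∑ k ∈ range n, ((k : K) + 1) * (n - k) := by
        rw [mul_sum]
        refine sum_congr rfl fun k hk => ?_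
        rw [Nat.sub_sub, Nat.cast_sub (by rw [mem_range] at hk; omega)]
        push_cast; ring

theorem IsPrimitiveRoot.sum_pow_div_one_sub_pow_sq [CharZero K] {ζ : K} {n : ℕ}
    (hζ : IsPrimitiveRoot ζ n) (hn : n ≠ 0) :
    ∑ j ∈ Icc 1 (n - 1), ζ ^ j / (1 - ζ ^ j) ^ 2 = -((n : K) ^ 2 - 1) / 12 := by
  have hn' : (n : K) ≠ 0 := Nat.cast_ne_zero.mpr hn
  have hterm : ∀ j ∈ Icc 1 (n - 1), ζ ^ j / (1 - ζ ^ j) ^ 2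
      = ζ ^ j * (∑ k ∈ range n, ((k : K) + 1) * (ζ ^ j) ^ k) ^ 2 / n ^ 2 := by
    intro j hj
    rw [mem_Icc] at hj
    exact div_one_sub_sq_eq (by rw [← pow_mul, mul_comm, pow_mul, hζ.pow_eq_one, one_pow])
      (hζ.pow_ne_one_of_pos_of_lt (by omega) (by omega)) hn'
  have hall := hζ.sum_range_pow_mul_sq
  rw [sum_range_eq_add_sum_Icc hn] at hall
  simp only [pow_zero, one_pow, mul_one, one_mul] at hall
  have h2 := two_mul_sum_range_succ (R := K) n
  have h6 := six_mul_sum_range_succ_mul_sub (R := K) n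
  rw [sum_congr rfl hterm, ← sum_div, div_eq_div_iff (pow_ne_zero 2 hn') (by norm_num)]
  linear_combination 12 * hall + 2 * n * h6
    - 3 * (2 * ∑ k ∈ range n, ((k : K) + 1) + n * (n + 1)) * h2

end RootsOfUnity

lemma twelve_dvd_sq_sub_one {n : ℕ} (h2 : ¬ 2 ∣ n) (h3 : ¬ 3 ∣ n) : 12 ∣ n ^ 2 - 1 := by
  have hsq : n ^ 2 % 12 = 1 := by
    have : n % 12 = 1 ∨ n % 12 = 5 ∨ n % 12 = 7 ∨ n % 12 = 11 := by omega
    rw [Nat.pow_mod]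
    rcases this with h | h | h | h <;> rw [h]
  have : 1 ≤ n ^ 2 := Nat.one_le_pow _ _ (by omega)
  omega

namespace RatFunc

variable {F K : Type*} [Field F] [Field K] [Algebra F K]

/-- `x` lies in the local ring of `F[X]` at the minimal polynomial of `ζ`, and `v` is its image in
the residue field `F(ζ)`. -/
def HasValueAt (x : RatFunc F) (ζ v : K) : Prop :=
  ∃ a b : F[X], aeval ζ b ≠ 0 ∧
    x * algebraMap F[X] (RatFunc F) b = algebraMap F[X] (RatFunc F) a ∧ aeval ζ a = v * aeval ζ b

variable {x y : RatFunc F} {ζ v w : K}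

lemma hasValueAt_algebraMap (f : F[X]) :
    HasValueAt (algebraMap F[X] (RatFunc F) f) ζ (aeval ζ f) :=
  ⟨f, 1, by simp, by simp, by simp⟩

lemma hasValueAt_zero : HasValueAt (0 : RatFunc F) ζ 0 := by
  simpa using hasValueAt_algebraMap (F := F) (ζ := ζ) 0

lemma HasValueAt.add (hx : HasValueAt x ζ v) (hy : HasValueAt y ζ w) :
    HasValueAt (x + y) ζ (v + w) := by
  obtain ⟨a, b, hb, hxab, hab⟩ := hx
  obtain ⟨c, d, hd, hycd, hcd⟩ := hy
  refine ⟨a * d + c * b, b * d, by simpa using mul_ne_zero hb hd, ?_, ?_⟩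
  · simp only [map_add, map_mul, ← hxab, ← hycd]; ring
  · simp only [map_add, map_mul, hab, hcd]; ring

lemma HasValueAt.sum {ι : Type*} (s : Finset ι) {f : ι → RatFunc F} {g : ι → K}
    (h : ∀ i ∈ s, HasValueAt (f i) ζ (g i)) : HasValueAt (∑ i ∈ s, f i) ζ (∑ i ∈ s, g i) := by
  induction s using Finset.cons_induction with
  | empty => simpa using hasValueAt_zero
  | cons i s hi ih =>
    rw [sum_cons, sum_cons]
    exact (h i (mem_cons_self i s)).add (ih fun j hj => h j (mem_cons_of_mem hj))

lemma HasValueAt.div (hx : HasValueAt x ζ v) (hy : HasValueAt y ζ w) (hw : w ≠ 0) :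
    HasValueAt (x / y) ζ (v / w) := by
  obtain ⟨a, b, hb, hxab, hab⟩ := hx
  obtain ⟨c, d, hd, hycd, hcd⟩ := hy
  have hc : aeval ζ c ≠ 0 := by rw [hcd]; exact mul_ne_zero hw hd
  have hy0 : y ≠ 0 := by
    rintro rfl
    rw [zero_mul, eq_comm, map_eq_zero_iff _ (algebraMap_injective F)] at hycd
    simp [hycd] at hc
  refine ⟨a * d, b * c, by simpa using mul_ne_zero hb hc, ?_, ?_⟩
  · simp only [map_mul, ← hycd, ← hxab]; field_simp
  · simp only [map_mul, hab, hcd]; field_simp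

end RatFunc

lemma modPow_one_of_hasValueAt_zero {K : Type*} [Field K] [Algebra ℚ K] {p : ℕ} {ζ : K}
    {x : RatFunc ℚ} (hmin : minpoly ℚ ζ = qnum p) (hx : RatFunc.HasValueAt x ζ 0) :
    ModPow p 1 x := by
  obtain ⟨a, b, hb, hxab, ha⟩ := hx
  rw [zero_mul, ← minpoly.dvd_iff, hmin] at ha
  obtain ⟨c, rfl⟩ := ha
  refine ⟨c, b, fun hdvd => hb ?_, by rw [pow_one]; exact hxab⟩
  rwa [← minpoly.dvd_iff, hmin]

lemma qnum_eq_minpoly {K : Type*} [Field K] [CharZero K] {p : ℕ} {ζ : K} (hp : p.Prime)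
    (hζ : IsPrimitiveRoot ζ p) : qnum p = minpoly ℚ ζ := by
  have := Fact.mk hp
  rw [← cyclotomic_eq_minpoly_rat hζ hp.pos, cyclotomic_prime]
  rfl

lemma one_sub_mul_aeval_qnum {K : Type*} [Field K] [Algebra ℚ K] (x : K) (n : ℕ) :
    (1 - x) * aeval x (qnum n) = 1 - x ^ n := by
  simp [qnum, mul_neg_geom_sum]

lemma hasValueAt_X_pow_div_qnum_sq {K : Type*} [Field K] [Algebra ℚ K] {x : K} {j : ℕ}
    (hj : x ^ j ≠ 1) :
    RatFunc.HasValueAt (Φ (X ^ j) / Φ (qnum j) ^ 2) x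
      ((1 - x) ^ 2 * (x ^ j / (1 - x ^ j) ^ 2)) := by
  have hq := one_sub_mul_aeval_qnum x j
  have hne : (1 - x) * aeval x (qnum j) ≠ 0 := by rw [hq]; exact sub_ne_zero.mpr hj.symm
  have := (RatFunc.hasValueAt_algebraMap (ζ := x) (X ^ j)).div
    (RatFunc.hasValueAt_algebraMap (qnum j ^ 2))
    (by rw [map_pow]; exact pow_ne_zero 2 (right_ne_zero_of_mul hne))
  rw [← hq]
  convert this using 1
  · simp [Φ]
  · rw [map_pow, map_pow, aeval_X]; field_simp [left_ne_zero_of_mul hne]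

/-- For a prime `p > 3`,
`∑_{j=1}^{p-1} q^j/[j]_q² ≡ -((p²-1)/12)(1-q)² (mod [p]_q)` in the localization of
`ℚ[q]` at `[p]_q`. -/
theorem q_sum_qj_sq (p : ℕ) (hp : p.Prime) (h3 : 3 < p) :
    ModPow p 1 ((∑ j ∈ Finset.Icc 1 (p-1), Φ (X^j) / (Φ (qnum j))^2)
      + Φ ((((p^2-1)/12 : ℕ) : ℚ[X]) * (1 - X)^2)) := by
  have hζ := Complex.isPrimitiveRoot_exp p hp.ne_zero
  set ζ := Complex.exp (2 * Real.pi * Complex.I / p)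
  have h12 : 12 ∣ p ^ 2 - 1 := twelve_dvd_sq_sub_one
    (fun h => by have := hp.eq_one_or_self_of_dvd 2 h; omega)
    (fun h => by have := hp.eq_one_or_self_of_dvd 3 h; omega)
  have hcast : (((p ^ 2 - 1) / 12 : ℕ) : ℂ) = ((p : ℂ) ^ 2 - 1) / 12 := by
    rw [Nat.cast_div h12 (by norm_num), Nat.cast_sub (Nat.one_le_pow _ _ hp.pos)]
    push_cast; ring
  have hterm : ∀ j ∈ Icc 1 (p - 1), RatFunc.HasValueAt (Φ (X ^ j) / Φ (qnum j) ^ 2) ζ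
      ((1 - ζ) ^ 2 * (ζ ^ j / (1 - ζ ^ j) ^ 2)) := fun j hj => by
    rw [mem_Icc] at hj
    exact hasValueAt_X_pow_div_qnum_sq (hζ.pow_ne_one_of_pos_of_lt (by omega) (by omega))
  refine modPow_one_of_hasValueAt_zero (qnum_eq_minpoly hp hζ).symm ?_
  convert (RatFunc.HasValueAt.sum _ hterm).add (RatFunc.hasValueAt_algebraMap (ζ := ζ)
    ((((p ^ 2 - 1) / 12 : ℕ) : ℚ[X]) * (1 - X) ^ 2)) using 1
  · rfl
  rw [← mul_sum, hζ.sum_pow_div_one_sub_pow_sq hp.ne_zero]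
  simp only [map_mul, map_natCast, hcast, map_pow, aeval_sub, map_one, aeval_X]
  ring
end

section
/- For every prime p > 3: ∑_{j=1}^{(p-1)/2} q^{2j}/[2j]_q² ≡ -((p²-1)/24)(1-q)² (mod [p]_q), in the localization of ℚ[q] at [p]_q. -/
open Polynomial Finset

/-!
Reduce modulo `[p]_q`: the localization of `ℚ[q]` at the prime `[p]_q` maps onto `ℚ(ζ)`, `ζ` a
primitive `p`-th root of unity, and `q^(2j)/[2j]_q²` goes to `(1-ζ)² ω/(1-ω)²` with `ω = ζ^(2j)`.
For a primitive `n`-th root `ζ` write `ω/(1-ω)² = u² - u` with `u = (1-ω)⁻¹`; the finite Fourier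
expansion `(1 - ζ^k)⁻¹ = -(1/n) ∑_j j ζ^(jk)` and orthogonality of roots of unity give
`∑_k u = (n-1)/2` and `∑_k u² = (n-1)(5-n)/12` over `k = 1, …, n-1`, so the full sum is
`-(n²-1)/12`. As `ω/(1-ω)²` is invariant under `ω ↦ ω⁻¹`, the sum over `ω = (ζ²)^j`,
`1 ≤ j ≤ (n-1)/2`, is half of that.
-/

section Arithmetic

variable {K : Type*} [Field K] [CharZero K]

theorem sum_range_natCast (n : ℕ) : ∑ j ∈ range n, (j : K) = n * (n - 1) / 2 := by
  induction n with
  | zero => simp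
  | succ n ih => rw [sum_range_succ, ih]; push_cast; ring

theorem sum_range_natCast_sq (n : ℕ) :
    ∑ j ∈ range n, (j : K) ^ 2 = n * (n - 1) * (2 * n - 1) / 6 := by
  induction n with
  | zero => simp
  | succ n ih => rw [sum_range_succ, ih]; push_cast; ring

end Arithmetic

theorem sum_range_natCast_mul_ite_dvd_add {R : Type*} [Ring R] {n j : ℕ} (hj : j < n) (c : R) :
    ∑ i ∈ range n, (j : R) * i * (if n ∣ j + i then c else 0) = j * (n - j) * c := by
  rcases Nat.eq_zero_or_pos j with rfl | hj0
  · simp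
  rw [sum_eq_single (n - j)]
  · rw [if_pos (by rw [Nat.add_sub_cancel' hj.le]), Nat.cast_sub hj.le]
  · intro i hi hij
    rw [if_neg, mul_zero]
    rintro ⟨m, hm⟩
    rw [mem_range] at hi
    rcases m with _ | _ | m
    · omega
    · omega
    · nlinarith
  · intro h; exact absurd (mem_range.2 (by omega)) h

theorem one_sub_mul_sum_range_natCast_mul_pow {R : Type*} [CommRing R] (x : R) (n : ℕ) :
    (1 - x) * ∑ j ∈ range n, (j : R) * x ^ j = ∑ j ∈ range n, x ^ j - 1 - (n - 1) * x ^ n := by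
  induction n with
  | zero => simp
  | succ n ih =>
    rw [sum_range_succ, sum_range_succ (fun j => x ^ j)]
    push_cast
    linear_combination ih

theorem div_one_sub_sq_eq_inv_sq_sub_inv {K : Type*} [Field K] (ω : K) :
    ω / (1 - ω) ^ 2 = (1 - ω)⁻¹ ^ 2 - (1 - ω)⁻¹ := by
  rcases eq_or_ne ω 1 with rfl | hω
  · simp
  have : 1 - ω ≠ 0 := sub_ne_zero.2 hω.symm
  field_simp
  ring

theorem inv_div_one_sub_inv_sq {K : Type*} [Field K] (ω : K) :
    ω⁻¹ / (1 - ω⁻¹) ^ 2 = ω / (1 - ω) ^ 2 := by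
  rcases eq_or_ne ω 0 with rfl | hω0
  · simp
  rcases eq_or_ne ω 1 with rfl | hω1
  · simp
  have : 1 - ω ≠ 0 := sub_ne_zero.2 hω1.symm
  have : ω - 1 ≠ 0 := sub_ne_zero.2 hω1
  field_simp
  ring

theorem pow_div_geom_sum_sq {K : Type*} [Field K] {x : K} (hx : x ≠ 1) (n : ℕ) :
    x ^ n / (∑ r ∈ range n, x ^ r) ^ 2 = (1 - x) ^ 2 * (x ^ n / (1 - x ^ n) ^ 2) := by
  rw [geom_sum_eq hx]
  rcases eq_or_ne (x ^ n) 1 with hxn | hxn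
  · simp [hxn]
  have : x - 1 ≠ 0 := sub_ne_zero.2 hx
  have : 1 - x ^ n ≠ 0 := sub_ne_zero.2 (Ne.symm hxn)
  have : x ^ n - 1 ≠ 0 := sub_ne_zero.2 hxn
  field_simp
  ring

theorem sum_Ico_one_eq_two_nsmul_sum_Icc_half {M : Type*} [AddCommMonoid M] {n : ℕ} (hn : Odd n)
    {f : ℕ → M} (hf : ∀ j ∈ Ico 1 n, f (n - j) = f j) :
    ∑ j ∈ Ico 1 n, f j = 2 • ∑ j ∈ Icc 1 (n / 2), f j := by
  obtain ⟨m, rfl⟩ := hn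
  have hupper : ∑ j ∈ Ico (m + 1) (2 * m + 1), f j = ∑ j ∈ Ico 1 (m + 1), f j := by
    have := sum_Ico_reflect f 1 (by omega : m + 1 ≤ 2 * m + 1 + 1)
    rw [show 2 * m + 1 + 1 - (m + 1) = m + 1 by omega, show 2 * m + 1 + 1 - 1 = 2 * m + 1 by omega]
      at this
    rw [← this]
    exact sum_congr rfl fun j hj => hf j (by simp at hj ⊢; omega)
  rw [show (2 * m + 1) / 2 = m by omega, ← Ico_add_one_right_eq_Icc,
    ← sum_Ico_consecutive f (by omega : 1 ≤ m + 1) (by omega : m + 1 ≤ 2 * m + 1), hupper,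
    two_nsmul]

namespace IsPrimitiveRoot

variable {K : Type*} [Field K] {n : ℕ} {ζ : K}

theorem sum_range_pow_mul (hζ : IsPrimitiveRoot ζ n) (t : ℕ) :
    ∑ k ∈ range n, ζ ^ (t * k) = if n ∣ t then (n : K) else 0 := by
  simp_rw [pow_mul]
  split_ifs with h
  · simp [(hζ.pow_eq_one_iff_dvd t).2 h]
  · rw [geom_sum_eq ((hζ.pow_eq_one_iff_dvd t).not.2 h), ← pow_mul, mul_comm, pow_mul,
      hζ.pow_eq_one, one_pow, sub_self, zero_div]

theorem sum_Ico_pow_mul (hζ : IsPrimitiveRoot ζ n) (hn : n ≠ 0) (t : ℕ) :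
    ∑ k ∈ Ico 1 n, ζ ^ (t * k) = (if n ∣ t then (n : K) else 0) - 1 := by
  rw [← hζ.sum_range_pow_mul, sum_range_eq_add_Ico _ (Nat.pos_of_ne_zero hn)]
  simp

variable [CharZero K]

theorem inv_one_sub_pow (hζ : IsPrimitiveRoot ζ n) (hn : n ≠ 0) {k : ℕ} (hk : ¬ n ∣ k) :
    (1 - ζ ^ k)⁻¹ = -(n : K)⁻¹ * ∑ j ∈ range n, j * ζ ^ (j * k) := by
  have hmul : (1 - ζ ^ k) * ∑ j ∈ range n, (j : K) * ζ ^ (j * k) = -n := by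
    have h := one_sub_mul_sum_range_natCast_mul_pow (ζ ^ k) n
    have hgeom : ∑ j ∈ range n, (ζ ^ k) ^ j = 0 := by
      simpa [← pow_mul, hk] using hζ.sum_range_pow_mul k
    have hpow : (ζ ^ k) ^ n = 1 := by rw [← pow_mul, mul_comm, pow_mul, hζ.pow_eq_one, one_pow]
    rw [hgeom, hpow] at h
    simp_rw [← pow_mul, mul_comm k] at h
    linear_combination h
  refine inv_eq_of_mul_eq_one_right ?_
  rw [mul_left_comm, hmul, neg_mul_neg, inv_mul_cancel₀ (Nat.cast_ne_zero.2 hn)]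

theorem sum_Ico_inv_one_sub_pow (hζ : IsPrimitiveRoot ζ n) (hn : n ≠ 0) :
    ∑ k ∈ Ico 1 n, (1 - ζ ^ k)⁻¹ = (n - 1) / 2 := by
  have hterm : ∀ j ∈ range n, (j : K) * ∑ k ∈ Ico 1 n, ζ ^ (j * k) = -j := by
    intro j hj
    rw [hζ.sum_Ico_pow_mul hn, mul_sub, mul_one]
    split_ifs with h
    · simp [Nat.eq_zero_of_dvd_of_lt h (mem_range.1 hj)]
    · simp
  calc ∑ k ∈ Ico 1 n, (1 - ζ ^ k)⁻¹
      = ∑ k ∈ Ico 1 n, -(n : K)⁻¹ * ∑ j ∈ range n, j * ζ ^ (j * k) :=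
        sum_congr rfl fun k hk => hζ.inv_one_sub_pow hn
          (Nat.not_dvd_of_pos_of_lt (mem_Ico.1 hk).1 (mem_Ico.1 hk).2)
    _ = -(n : K)⁻¹ * ∑ j ∈ range n, j * ∑ k ∈ Ico 1 n, ζ ^ (j * k) := by
        rw [← mul_sum, sum_comm]; simp_rw [mul_sum]
    _ = (n - 1) / 2 := by
        have : (n : K) ≠ 0 := Nat.cast_ne_zero.2 hn
        rw [sum_congr rfl hterm, sum_neg_distrib, sum_range_natCast]
        field_simp

theorem sum_Ico_inv_one_sub_pow_sq (hζ : IsPrimitiveRoot ζ n) (hn : n ≠ 0) :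
    ∑ k ∈ Ico 1 n, (1 - ζ ^ k)⁻¹ ^ 2 = (n - 1) * (5 - n) / 12 := by
  have hsq : ∀ k ∈ Ico 1 n, (1 - ζ ^ k)⁻¹ ^ 2
      = (n : K)⁻¹ ^ 2 * ∑ j ∈ range n, ∑ i ∈ range n, (j : K) * i * ζ ^ ((j + i) * k) := by
    intro k hk
    rw [hζ.inv_one_sub_pow hn (Nat.not_dvd_of_pos_of_lt (mem_Ico.1 hk).1 (mem_Ico.1 hk).2),
      mul_pow, neg_sq, sq (∑ j ∈ range n, _), sum_mul_sum]
    congr 1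
    refine sum_congr rfl fun j _ => sum_congr rfl fun i _ => ?_
    rw [add_mul, pow_add]
    ring
  have hinner : ∀ j ∈ range n, ∑ i ∈ range n, (j : K) * i * ∑ k ∈ Ico 1 n, ζ ^ ((j + i) * k)
      = n ^ 2 * j - n * j ^ 2 - n * (n - 1) / 2 * j := by
    intro j hj
    simp_rw [hζ.sum_Ico_pow_mul hn, mul_sub, mul_one, sum_sub_distrib,
      sum_range_natCast_mul_ite_dvd_add (mem_range.1 hj), ← mul_sum, sum_range_natCast]
    ring
  have : (n : K) ≠ 0 := Nat.cast_ne_zero.2 hn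
  calc ∑ k ∈ Ico 1 n, (1 - ζ ^ k)⁻¹ ^ 2
      = ∑ k ∈ Ico 1 n, (n : K)⁻¹ ^ 2 *
          ∑ j ∈ range n, ∑ i ∈ range n, (j : K) * i * ζ ^ ((j + i) * k) := sum_congr rfl hsq
    _ = (n : K)⁻¹ ^ 2 *
          ∑ j ∈ range n, ∑ i ∈ range n, (j : K) * i * ∑ k ∈ Ico 1 n, ζ ^ ((j + i) * k) := by
        simp_rw [← mul_sum]
        rw [sum_comm]
        refine congrArg _ (sum_congr rfl fun j _ => ?_)
        rw [sum_comm]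
        simp_rw [mul_sum]
    _ = (n - 1) * (5 - n) / 12 := by
        rw [sum_congr rfl hinner, sum_sub_distrib, sum_sub_distrib, ← mul_sum, ← mul_sum,
          ← mul_sum, sum_range_natCast, sum_range_natCast_sq]
        field_simp
        ring

theorem sum_Ico_pow_div_one_sub_pow_sq (hζ : IsPrimitiveRoot ζ n) (hn : n ≠ 0) :
    ∑ k ∈ Ico 1 n, ζ ^ k / (1 - ζ ^ k) ^ 2 = -((n : K) ^ 2 - 1) / 12 := by
  simp_rw [div_one_sub_sq_eq_inv_sq_sub_inv]
  rw [sum_sub_distrib, hζ.sum_Ico_inv_one_sub_pow_sq hn, hζ.sum_Ico_inv_one_sub_pow hn]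
  ring

theorem sum_Icc_pow_two_mul_div_one_sub_pow_sq (hζ : IsPrimitiveRoot ζ n) (hn : Odd n) :
    ∑ j ∈ Icc 1 (n / 2), ζ ^ (2 * j) / (1 - ζ ^ (2 * j)) ^ 2 = -((n : K) ^ 2 - 1) / 24 := by
  have hξ : IsPrimitiveRoot (ζ ^ 2) n := hζ.pow_of_coprime 2 (Nat.coprime_two_left.2 hn)
  have hsymm : ∀ j ∈ Ico 1 n, (ζ ^ 2) ^ (n - j) / (1 - (ζ ^ 2) ^ (n - j)) ^ 2
      = (ζ ^ 2) ^ j / (1 - (ζ ^ 2) ^ j) ^ 2 := by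
    intro j hj
    rw [pow_sub₀ _ (hξ.ne_zero hn.pos.ne') (mem_Ico.1 hj).2.le, hξ.pow_eq_one, one_mul,
      inv_div_one_sub_inv_sq]
  have h := sum_Ico_one_eq_two_nsmul_sum_Icc_half hn
    (f := fun j => (ζ ^ 2) ^ j / (1 - (ζ ^ 2) ^ j) ^ 2) hsymm
  rw [hξ.sum_Ico_pow_div_one_sub_pow_sq hn.pos.ne', two_nsmul] at h
  simp_rw [pow_mul]
  linear_combination -h / 2

end IsPrimitiveRoot

section Residue

variable {F : Type*} [Field F]

/-- `x` lies in the localization of `F[X]` at the prime `(P)` and reduces to `v` in the residue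
field `F[X] ⧸ (P)`. -/
def HasResidue (P : F[X]) (x : RatFunc F) (v : AdjoinRoot P) : Prop :=
  ∃ a b : F[X], AdjoinRoot.mk P b ≠ 0 ∧ x * algebraMap F[X] (RatFunc F) b = algebraMap _ _ a ∧
    AdjoinRoot.mk P a = v * AdjoinRoot.mk P b

variable {P : F[X]} [Fact (Irreducible P)] {x y : RatFunc F} {v w : AdjoinRoot P}

theorem hasResidue_algebraMap (a : F[X]) :
    HasResidue P (algebraMap F[X] (RatFunc F) a) (AdjoinRoot.mk P a) :=
  ⟨a, 1, by simp, by simp, by simp⟩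

theorem HasResidue.add (hx : HasResidue P x v) (hy : HasResidue P y w) :
    HasResidue P (x + y) (v + w) := by
  obtain ⟨a, b, hb, hxab, hab⟩ := hx
  obtain ⟨c, d, hd, hycd, hcd⟩ := hy
  refine ⟨a * d + c * b, b * d, by simp [hb, hd], ?_, ?_⟩
  · simp only [map_add, map_mul, ← hxab, ← hycd]
    ring
  · simp only [map_add, map_mul, hab, hcd]
    ring

theorem HasResidue.sum {ι : Type*} (s : Finset ι) {f : ι → RatFunc F} {u : ι → AdjoinRoot P}
    (h : ∀ i ∈ s, HasResidue P (f i) (u i)) :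
    HasResidue P (∑ i ∈ s, f i) (∑ i ∈ s, u i) := by
  classical
  induction s using Finset.induction_on with
  | empty => simpa using hasResidue_algebraMap (P := P) 0
  | insert i s hi ih =>
    rw [sum_insert hi, sum_insert hi]
    exact (h i (mem_insert_self i s)).add (ih fun j hj => h j (mem_insert_of_mem hj))

theorem HasResidue.mul (hx : HasResidue P x v) (hy : HasResidue P y w) :
    HasResidue P (x * y) (v * w) := by
  obtain ⟨a, b, hb, hxab, hab⟩ := hx
  obtain ⟨c, d, hd, hycd, hcd⟩ := hy
  refine ⟨a * c, b * d, by simp [hb, hd], ?_, ?_⟩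
  · simp only [map_mul, ← hxab, ← hycd]
    ring
  · simp only [map_mul, hab, hcd]
    ring

theorem HasResidue.inv (hx : HasResidue P x v) (hv : v ≠ 0) : HasResidue P x⁻¹ v⁻¹ := by
  obtain ⟨a, b, hb, hxab, hab⟩ := hx
  have ha : AdjoinRoot.mk P a ≠ 0 := by simp [hab, hv, hb]
  have hΦa : algebraMap F[X] (RatFunc F) a ≠ 0 :=
    (map_ne_zero_iff _ (IsFractionRing.injective _ _)).2 fun h => ha (by simp [h])
  refine ⟨b, a, ha, ?_, by rw [hab]; field_simp⟩
  have hx : x ≠ 0 := by rintro rfl; exact hΦa (by simpa using hxab.symm)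
  rw [← hxab]
  field_simp

theorem HasResidue.div (hx : HasResidue P x v) (hy : HasResidue P y w) (hw : w ≠ 0) :
    HasResidue P (x / y) (v / w) := by
  rw [div_eq_mul_inv, div_eq_mul_inv]
  exact hx.mul (hy.inv hw)

end Residue

theorem twentyFour_dvd_sq_sub_one {p : ℕ} (h2 : ¬ 2 ∣ p) (h3 : ¬ 3 ∣ p) : 24 ∣ p ^ 2 - 1 := by
  have hmod : p ^ 2 % 24 = 1 := by
    rw [Nat.pow_mod]
    have : p % 24 < 24 := Nat.mod_lt _ (by norm_num)
    interval_cases h : p % 24 <;> omega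
  omega

theorem Nat.Prime.cast_sq_sub_one_div_twentyFour {K : Type*} [Field K] [CharZero K] {p : ℕ}
    (hp : p.Prime) (h3 : 3 < p) : (((p ^ 2 - 1) / 24 : ℕ) : K) = ((p : K) ^ 2 - 1) / 24 := by
  have h24 : 24 ∣ p ^ 2 - 1 := twentyFour_dvd_sq_sub_one
    (fun h => by have := hp.eq_one_or_self_of_dvd 2 h; omega)
    (fun h => by have := hp.eq_one_or_self_of_dvd 3 h; omega)
  rw [Nat.cast_div h24 (by norm_num), Nat.cast_sub (Nat.one_le_pow _ _ hp.pos)]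
  push_cast
  rfl

theorem modPow_one_of_hasResidue_zero {p : ℕ} {x : RatFunc ℚ} (hx : HasResidue (qnum p) x 0) :
    ModPow p 1 x := by
  obtain ⟨a, b, hb, hxab, hab⟩ := hx
  obtain ⟨c, rfl⟩ := AdjoinRoot.mk_eq_zero.1 (by simpa using hab)
  exact ⟨c, b, fun h => hb (AdjoinRoot.mk_eq_zero.2 h), by rw [pow_one]; exact hxab⟩

theorem qnum_eq_cyclotomic {p : ℕ} (hp : p.Prime) : qnum p = cyclotomic p ℚ := by
  have := Fact.mk hp
  exact (cyclotomic_prime ℚ p).symm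

theorem irreducible_qnum {p : ℕ} (hp : p.Prime) : Irreducible (qnum p) :=
  qnum_eq_cyclotomic hp ▸ cyclotomic.irreducible_rat hp.pos

theorem AdjoinRoot.mk_qnum (P : ℚ[X]) (n : ℕ) :
    AdjoinRoot.mk P (qnum n) = ∑ r ∈ range n, AdjoinRoot.root P ^ r := by
  simp [qnum]

theorem isPrimitiveRoot_root_qnum {p : ℕ} (hp : p.Prime) [Fact (Irreducible (qnum p))] :
    IsPrimitiveRoot (AdjoinRoot.root (qnum p)) p := by
  have := algebraRat.charZero (AdjoinRoot (qnum p))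
  have := NeZero.mk hp.ne_zero
  rw [← isRoot_cyclotomic_iff, ← map_cyclotomic p (AdjoinRoot.of (qnum p)), ← qnum_eq_cyclotomic hp]
  exact AdjoinRoot.isRoot_root _

theorem hasResidue_X_pow_div_qnum_sq {p n : ℕ} (hp : p.Prime) [Fact (Irreducible (qnum p))]
    (hn : n ≠ 0) (hnp : n < p) :
    HasResidue (qnum p) (Φ (X ^ n) / Φ (qnum n) ^ 2) ((1 - AdjoinRoot.root (qnum p)) ^ 2 *
      (AdjoinRoot.root (qnum p) ^ n / (1 - AdjoinRoot.root (qnum p) ^ n) ^ 2)) := by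
  have hζ := isPrimitiveRoot_root_qnum hp
  have hζ1 := hζ.ne_one hp.one_lt
  have hden : AdjoinRoot.mk (qnum p) (qnum n ^ 2) ≠ 0 := by
    rw [map_pow, AdjoinRoot.mk_qnum, geom_sum_eq hζ1]
    exact pow_ne_zero _ (div_ne_zero (sub_ne_zero.2 (hζ.pow_ne_one_of_pos_of_lt hn hnp))
      (sub_ne_zero.2 hζ1))
  have h := (hasResidue_algebraMap (X ^ n)).div (hasResidue_algebraMap _) hden
  simp only [map_pow, AdjoinRoot.mk_X, AdjoinRoot.mk_qnum, pow_div_geom_sum_sq hζ1] at h ⊢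
  exact h

/-- For a prime `p > 3`,
`∑_{j=1}^{(p-1)/2} q^(2j)/[2j]_q² ≡ -((p²-1)/24)(1-q)² (mod [p]_q)` in the localization
of `ℚ[q]` at `[p]_q`. -/
theorem q_half_sum_sq (p : ℕ) (hp : p.Prime) (h3 : 3 < p) :
    ModPow p 1 ((∑ j ∈ Finset.Icc 1 ((p-1)/2), Φ (X^(2*j)) / (Φ (qnum (2*j)))^2)
      + Φ ((((p^2-1)/24 : ℕ) : ℚ[X]) * (1 - X)^2)) := by
  have := Fact.mk (irreducible_qnum hp)
  have := algebraRat.charZero (AdjoinRoot (qnum p))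
  have hζ := isPrimitiveRoot_root_qnum hp
  have hodd : Odd p := hp.odd_of_ne_two (by omega)
  set ζ := AdjoinRoot.root (qnum p) with hζdef
  have hzero : ∑ j ∈ Icc 1 ((p - 1) / 2), (1 - ζ) ^ 2 * (ζ ^ (2 * j) / (1 - ζ ^ (2 * j)) ^ 2)
      + AdjoinRoot.mk (qnum p) ((((p ^ 2 - 1) / 24 : ℕ) : ℚ[X]) * (1 - X) ^ 2) = 0 := by
    simp only [map_mul, map_sub, map_pow, map_natCast, map_one, AdjoinRoot.mk_X, ← hζdef]
    rw [← mul_sum, show (p - 1) / 2 = p / 2 by have := Nat.odd_iff.1 hodd; omega,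
      hζ.sum_Icc_pow_two_mul_div_one_sub_pow_sq hodd, hp.cast_sq_sub_one_div_twentyFour h3]
    ring
  refine modPow_one_of_hasResidue_zero ?_
  rw [← hzero]
  refine (HasResidue.sum _ fun j hj => ?_).add (hasResidue_algebraMap _)
  exact hasResidue_X_pow_div_qnum_sq hp (by simp at hj; omega) (by simp at hj; omega)
end

section
/- Lerch's congruence: for every odd prime p and positive integer m with p ∤ m, (m^p - m)/p ≡ ∑_{j=1}^{p-1} ⌊jm/p⌋/j (mod p), as a congruence of rationals with denominators coprime to p. -/
/-!
Let `q(a) = (a^(p-1) - 1)/p` be the Fermat quotient, so that `(m^p - m)/p = m q(m)`. Modulo `p`,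
`q(ab) ≡ q(a) + q(b)` and, by the binomial theorem, `q(r + pf) ≡ q(r) - f/r`. Write
`jm = r_j + p⌊jm/p⌋` with `r_j = jm mod p`; since `j ↦ r_j` permutes `{1, …, p-1}`, summing `q(jm)`
over `1 ≤ j ≤ p-1` in these two ways gives `∑ q(j) - q(m) ≡ ∑ q(j) - ∑ ⌊jm/p⌋/(jm)`, that is
`m q(m) ≡ ∑ ⌊jm/p⌋/j`. Multiplying by `(p-1)!` turns this congruence into an integer one.
-/

open Finset

def fermatQuotient (p : ℕ) (a : ℤ) : ℤ := (a ^ (p - 1) - 1) / p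

section FermatQuotient

variable {p : ℕ} [hp : Fact p.Prime]

theorem mul_fermatQuotient {a : ℤ} (ha : (a : ZMod p) ≠ 0) :
    p * fermatQuotient p a = a ^ (p - 1) - 1 := by
  refine Int.mul_ediv_cancel' ((ZMod.intCast_zmod_eq_zero_iff_dvd _ p).mp ?_)
  push_cast
  rw [ZMod.pow_card_sub_one_eq_one ha, sub_self]

theorem fermatQuotient_mul {a b : ℤ} (ha : (a : ZMod p) ≠ 0) (hb : (b : ZMod p) ≠ 0) :
    (fermatQuotient p (a * b) : ZMod p) = fermatQuotient p a + fermatQuotient p b := by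
  have hab : ((a * b : ℤ) : ZMod p) ≠ 0 := by push_cast; exact mul_ne_zero ha hb
  have hp0 : (p : ℤ) ≠ 0 := by exact_mod_cast hp.out.ne_zero
  have key : fermatQuotient p (a * b) =
      p * (fermatQuotient p a * fermatQuotient p b) + fermatQuotient p a + fermatQuotient p b := by
    refine mul_left_cancel₀ hp0 ?_
    linear_combination mul_fermatQuotient hab - b ^ (p - 1) * mul_fermatQuotient ha
      - (p * fermatQuotient p a + 1) * mul_fermatQuotient hb
  rw [key]
  push_cast
  rw [ZMod.natCast_self, zero_mul, zero_add]

theorem fermatQuotient_add_mul {r : ℤ} (f : ℤ) (hr : (r : ZMod p) ≠ 0) :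
    (fermatQuotient p (r + p * f) : ZMod p) = fermatQuotient p r - f / r := by
  have hrf : ((r + p * f : ℤ) : ZMod p) ≠ 0 := by simpa using hr
  have hp0 : (p : ℤ) ≠ 0 := by exact_mod_cast hp.out.ne_zero
  obtain ⟨c, hc⟩ := sq_dvd_add_pow_sub_sub (p * f) r (p - 1)
  have key : fermatQuotient p (r + p * f) =
      fermatQuotient p r + r ^ (p - 1 - 1) * f * (p - 1 : ℕ) + p * f ^ 2 * c := by
    refine mul_left_cancel₀ hp0 ?_
    linear_combination mul_fermatQuotient hrf - mul_fermatQuotient hr + hc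
  have hinv : (r : ZMod p) ^ (p - 1 - 1) = (r : ZMod p)⁻¹ := by
    refine eq_inv_of_mul_eq_one_left ?_
    rw [← pow_succ, Nat.sub_add_cancel (by have := hp.out.two_le; omega)]
    exact ZMod.pow_card_sub_one_eq_one hr
  rw [key]
  push_cast
  rw [Nat.cast_sub hp.out.one_le, ZMod.natCast_self, hinv]
  ring

theorem pow_sub_self_div_eq_mul_fermatQuotient {a : ℤ} (ha : (a : ZMod p) ≠ 0) :
    ((a : ℚ) ^ p - a) / p = a * fermatQuotient p a := by
  have hp0 : (p : ℚ) ≠ 0 := by exact_mod_cast hp.out.ne_zero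
  have h : (p : ℚ) * fermatQuotient p a = a ^ (p - 1) - 1 := by exact_mod_cast mul_fermatQuotient ha
  rw [div_eq_iff hp0, ← pow_sub_one_mul hp.out.ne_zero]
  linear_combination -(a : ℚ) * h

end FermatQuotient

theorem sum_Icc_mul_mod_eq {M : Type*} [AddCommMonoid M] {p m : ℕ} (hp : p.Prime) (hpm : ¬ p ∣ m)
    (g : ℕ → M) : ∑ j ∈ Icc 1 (p - 1), g (j * m % p) = ∑ j ∈ Icc 1 (p - 1), g j := by
  have hmaps : ∀ j ∈ Icc 1 (p - 1), j * m % p ∈ Icc 1 (p - 1) := by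
    intro j hj
    rw [mem_Icc] at hj ⊢
    have hpj : ¬ p ∣ j * m := fun h =>
      (hp.dvd_mul.mp h).elim (fun h => absurd (Nat.le_of_dvd (by omega) h) (by omega)) hpm
    have := Nat.mod_lt (j * m) hp.pos
    have := (Nat.dvd_iff_mod_eq_zero).not.mp hpj
    omega
  have hinj : Set.InjOn (fun j => j * m % p) (Icc 1 (p - 1) : Set ℕ) := by
    intro j₁ hj₁ j₂ hj₂ h
    simp only [coe_Icc, Set.mem_Icc] at hj₁ hj₂
    have : j₁ ≡ j₂ [MOD p] :=
      Nat.ModEq.cancel_right_of_coprime ((Nat.Prime.coprime_iff_not_dvd hp).mpr hpm) h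
    rwa [Nat.ModEq, Nat.mod_eq_of_lt (by omega), Nat.mod_eq_of_lt (by omega)] at this
  exact sum_nbij _ hmaps hinj (surjOn_of_injOn_of_card_le _ hmaps hinj le_rfl) fun _ _ => rfl

theorem natCast_ne_zero_of_mem_Icc {p j : ℕ} (hj : j ∈ Icc 1 (p - 1)) : (j : ZMod p) ≠ 0 := by
  rw [mem_Icc] at hj
  rw [Ne, ZMod.natCast_eq_zero_iff]
  exact fun h => absurd (Nat.le_of_dvd (by omega) h) (by omega)

theorem natCast_mul_fermatQuotient_eq_sum {p m : ℕ} [hp : Fact p.Prime] (hm : (m : ZMod p) ≠ 0) :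
    (m * fermatQuotient p m : ZMod p) = ∑ j ∈ Icc 1 (p - 1), ((j * m / p : ℕ) : ZMod p) / j := by
  have hpm : ¬ p ∣ m := by rwa [Ne, ZMod.natCast_eq_zero_iff] at hm
  have hcard : (#(Icc 1 (p - 1)) : ZMod p) = -1 := by
    rw [Nat.card_Icc, Nat.add_sub_cancel, Nat.cast_sub hp.out.one_le, ZMod.natCast_self, zero_sub,
      Nat.cast_one]
  have by_mul : ∑ j ∈ Icc 1 (p - 1), (fermatQuotient p (j * m) : ZMod p)
      = ∑ j ∈ Icc 1 (p - 1), (fermatQuotient p j : ZMod p) - fermatQuotient p m := by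
    rw [sum_congr rfl fun j hj => fermatQuotient_mul
      (by exact_mod_cast natCast_ne_zero_of_mem_Icc hj) (by exact_mod_cast hm),
      sum_add_distrib, sum_const, nsmul_eq_mul, hcard]
    ring
  have by_div : ∑ j ∈ Icc 1 (p - 1), (fermatQuotient p (j * m) : ZMod p)
      = ∑ j ∈ Icc 1 (p - 1), (fermatQuotient p j : ZMod p)
        - ∑ j ∈ Icc 1 (p - 1), ((j * m / p : ℕ) : ZMod p) / (j * m) := by
    rw [← sum_Icc_mul_mod_eq hp.out hpm (fun r => (fermatQuotient p r : ZMod p)),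
      ← sum_sub_distrib]
    refine sum_congr rfl fun j hj => ?_
    have hjm : (j * m : ZMod p) ≠ 0 := mul_ne_zero (natCast_ne_zero_of_mem_Icc hj) hm
    have hr : (((j * m % p : ℕ) : ℤ) : ZMod p) = j * m := by simp
    have hsplit : (j * m : ℤ) = (j * m % p : ℕ) + p * (j * m / p : ℕ) := by
      exact_mod_cast (Nat.mod_add_div (j * m) p).symm
    rw [hsplit, fermatQuotient_add_mul _ (by rwa [hr]), hr, Int.cast_natCast]
  have hq : (fermatQuotient p m : ZMod p)
      = ∑ j ∈ Icc 1 (p - 1), ((j * m / p : ℕ) : ZMod p) / (j * m) := by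
    linear_combination by_mul - by_div
  rw [hq, mul_sum]
  refine sum_congr rfl fun j _ => ?_
  field_simp

theorem sum_div_natCast_mul_natCast {K : Type*} [Field K] {s : Finset ℕ} {W : ℕ}
    (f : ℕ → K) (hs : ∀ j ∈ s, j ∣ W ∧ (j : K) ≠ 0) :
    (∑ j ∈ s, f j / j) * W = ∑ j ∈ s, f j * ((W / j : ℕ) : K) := by
  rw [sum_mul]
  refine sum_congr rfl fun j hj => ?_
  rw [Nat.cast_div (hs j hj).1 (hs j hj).2, div_mul_eq_mul_div, mul_div_assoc]

theorem Rat.dvd_num_of_mul_eq {p : ℤ} (hp : Prime p) {x : ℚ} {W N : ℤ} (hW : ¬ p ∣ W)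
    (hN : p ∣ N) (h : x * W = N) : p ∣ x.num := by
  have hnum : x.num * W = N * x.den := by
    exact_mod_cast (by rw [← h, ← Rat.mul_den_eq_num]; ring : (x.num : ℚ) * W = N * x.den)
  exact (hp.dvd_or_dvd (hnum ▸ hN.mul_right _)).resolve_right hW

theorem lerch_congruence_general (p m : ℕ) (hp : p.Prime) (hpm : ¬ p ∣ m) :
    (p : ℤ) ∣ ((((m : ℚ))^p - m)/p
      - ∑ j ∈ Finset.Icc 1 (p-1), ((j*m/p : ℕ) : ℚ)/j).num := by
  have := Fact.mk hp
  have hm : (m : ZMod p) ≠ 0 := by rwa [Ne, ZMod.natCast_eq_zero_iff]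
  have hdvd : ∀ j ∈ Icc 1 (p - 1), j ∣ (p - 1).factorial := fun j hj =>
    Nat.dvd_factorial (mem_Icc.mp hj).1 (mem_Icc.mp hj).2
  refine Rat.dvd_num_of_mul_eq (Nat.prime_iff_prime_int.mp hp) (W := (p - 1).factorial)
    (N := m * fermatQuotient p m * (p - 1).factorial
      - ∑ j ∈ Icc 1 (p - 1), ((j * m / p : ℕ) : ℤ) * (((p - 1).factorial / j : ℕ) : ℤ)) ?_ ?_ ?_
  · rw [Int.natCast_dvd_natCast, hp.dvd_factorial]
    have := hp.one_lt
    omega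
  · rw [← ZMod.intCast_zmod_eq_zero_iff_dvd]
    simp only [Int.cast_sub, Int.cast_mul, Int.cast_sum, Int.cast_natCast]
    rw [natCast_mul_fermatQuotient_eq_sum hm, sum_div_natCast_mul_natCast _
      fun j hj => ⟨hdvd j hj, natCast_ne_zero_of_mem_Icc hj⟩, sub_self]
  · have hq := pow_sub_self_div_eq_mul_fermatQuotient (a := m) (by exact_mod_cast hm)
    push_cast at hq
    simp only [Int.cast_sub, Int.cast_mul, Int.cast_sum, Int.cast_natCast]
    rw [hq, sub_mul, sum_div_natCast_mul_natCast _
      fun j hj => ⟨hdvd j hj, by have := (mem_Icc.mp hj).1; positivity⟩]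

/-- Lerch's congruence: for an odd prime `p` and positive integer `m` with `p ∤ m`,
`(m^p - m)/p ≡ ∑_{j=1}^{p-1} ⌊jm/p⌋/j (mod p)`, i.e. `p` divides the numerator of
the difference of these two rationals. -/
theorem lerch_congruence (p m : ℕ) (hp : p.Prime) (hodd : Odd p)
    (hm : 0 < m) (hpm : ¬ p ∣ m) :
    (p : ℤ) ∣ ((((m : ℚ))^p - m)/p
      - ∑ j ∈ Finset.Icc 1 (p-1), ((j*m/p : ℕ) : ℚ)/j).num :=
  lerch_congruence_general p m hp hpm
end

section
/- For every nonnegative integer n, the polynomial identity ∑_{k=0}^{n} (-1)^k · C(n,k)_q · q^{binom(n-k,2)} · (-q;q)_k = (-1)^n q^{binom(n+1,2)} holds in ℤ[q]. -/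
open Polynomial Finset

noncomputable def gb : ℕ → ℕ → ℤ[X]
  | _, 0 => 1
  | 0, _+1 => 0
  | n+1, k+1 => gb n (k+1) + X^(n-k) * gb n k

@[simp] lemma gb_zero (n : ℕ) : gb n 0 = 1 := by cases n <;> rfl

lemma gb_succ_succ (n k : ℕ) : gb (n+1) (k+1) = gb n (k+1) + X^(n-k) * gb n k := rfl

lemma gb_of_lt : ∀ n k : ℕ, n < k → gb n k = 0 := by
  intro n
  induction n with
  | zero =>
    intro k hk
    cases k with
    | zero => omega
    | succ k => rfl
  | succ n ih =>
    intro k hk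
    cases k with
    | zero => omega
    | succ k =>
      rw [gb_succ_succ, ih _ (by omega), ih _ (by omega)]
      ring

lemma gb_diag : ∀ n : ℕ, gb n n = 1 := by
  intro n
  induction n with
  | zero => rfl
  | succ n ih => rw [gb_succ_succ, gb_of_lt n (n+1) (by omega), ih]; simp

noncomputable def qfac (n : ℕ) : ℤ[X] := ∏ j ∈ Finset.Icc 1 n, (1 - X^j)

@[simp] lemma qfac_zero : qfac 0 = 1 := by simp [qfac]

lemma qfac_succ (n : ℕ) : qfac (n+1) = qfac n * (1 - X^(n+1)) := by
  rw [qfac, qfac, Finset.prod_Icc_succ_top (by omega)]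

lemma gb_mul : ∀ n k : ℕ, k ≤ n → gb n k * qfac k * qfac (n-k) = qfac n := by
  intro n
  induction n with
  | zero => intro k hk; interval_cases k; simp
  | succ n ih =>
    intro k hk
    cases k with
    | zero => simp
    | succ m =>
      rcases eq_or_lt_of_le (Nat.succ_le_succ_iff.mp hk) with h | h
      · subst h
        rw [gb_diag, show m+1 - (m+1) = 0 by omega]
        simp
      · obtain ⟨d, rfl⟩ : ∃ d, n = m + 1 + d := ⟨n - (m+1), by omega⟩
        have IH1 := ih (m+1) (by omega)
        have IH2 := ih m (by omega)
        rw [show m+1+d - (m+1) = d by omega] at IH1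
        rw [show m+1+d - m = d+1 by omega] at IH2
        rw [gb_succ_succ, show m+1+d+1 - (m+1) = d+1 by omega,
            show m+1+d - m = d+1 by omega]
        simp only [qfac_succ] at IH1 IH2 ⊢
        linear_combination (1 - X^(d+1 : ℕ)) * IH1 + X^(d+1 : ℕ) * (1 - X^(m+1 : ℕ)) * IH2

noncomputable def pp (k : ℕ) : ℤ[X] := ∏ i ∈ Finset.Icc 1 k, (1 + X^i)

@[simp] lemma pp_zero : pp 0 = 1 := by simp [pp]

lemma pp_succ (k : ℕ) : pp (k+1) = pp k * (1 + X^(k+1)) := by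
  rw [pp, pp, Finset.prod_Icc_succ_top (by omega)]

lemma choose2_succ (m : ℕ) : (m+1).choose 2 = m.choose 2 + m := by
  show (m+1).choose (1+1) = m.choose (1+1) + m
  rw [Nat.choose_succ_succ, Nat.choose_one_right]
  simp only [Nat.succ_eq_add_one]
  omega

lemma key : ∀ n : ℕ,
    ∑ k ∈ Finset.range (n+1), (-1)^k * gb n k * X^(Nat.choose (n-k) 2) * pp k
      = (-1)^n * X^(Nat.choose (n+1) 2) := by
  intro n
  induction n with
  | zero => simp
  | succ n ih =>
    rw [Finset.sum_range_succ']
    have hstep : ∀ j ∈ Finset.range (n+1),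
        (-1:ℤ[X])^(j+1) * gb (n+1) (j+1) * X^(Nat.choose (n+1-(j+1)) 2) * pp (j+1)
        = (((-1)^(j+1) * gb n (j+1) * X^(Nat.choose (n+1-(j+1)) 2) * pp (j+1))
            - ((-1)^j * gb n j * X^(Nat.choose (n+1-j) 2) * pp j))
          - X^(n+1) * ((-1)^j * gb n j * X^(Nat.choose (n-j) 2) * pp j) := by
      intro j hj
      simp only [Finset.mem_range] at hj
      obtain ⟨a, rfl⟩ : ∃ a, n = j + a := ⟨n - j, by omega⟩
      rw [gb_succ_succ, show j+a+1-(j+1) = a by omega, show j+a-j = a by omega,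
          show j+a+1-j = a+1 by omega, choose2_succ, pp_succ]
      ring
    rw [Finset.sum_congr rfl hstep, Finset.sum_sub_distrib]
    have htel : ∑ j ∈ Finset.range (n+1),
        (((-1:ℤ[X])^(j+1) * gb n (j+1) * X^(Nat.choose (n+1-(j+1)) 2) * pp (j+1))
          - ((-1)^j * gb n j * X^(Nat.choose (n+1-j) 2) * pp j))
        = ((-1)^(n+1) * gb n (n+1) * X^(Nat.choose (n+1-(n+1)) 2) * pp (n+1))
          - ((-1)^0 * gb n 0 * X^(Nat.choose (n+1-0) 2) * pp 0) :=
      Finset.sum_range_sub (fun k => (-1)^k * gb n k * X^(Nat.choose (n+1-k) 2) * pp k) (n+1)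
    rw [htel, gb_of_lt n (n+1) (by omega)]
    have hmul : ∑ j ∈ Finset.range (n+1),
        X^(n+1) * ((-1:ℤ[X])^j * gb n j * X^(Nat.choose (n-j) 2) * pp j)
        = X^(n+1) * ((-1)^n * X^(Nat.choose (n+1) 2)) := by
      rw [← Finset.mul_sum, ih]
    rw [hmul, choose2_succ (n+1), pow_add]
    simp
    ring

/-- The polynomial identity
`∑_{k=0}^n (-1)^k C(n,k)_q q^(C(n-k,2)) (-q;q)_k = (-1)^n q^(C(n+1,2))` in `ℤ[q]`,
where `B k = C(n,k)_q` is the Gaussian binomial coefficient, characterized by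
`B k · (q;q)_k · (q;q)_{n-k} = (q;q)_n`. -/
theorem q_alternating_identity (n : ℕ) :
    ∃ B : ℕ → ℤ[X],
      (∀ k ≤ n,
        B k * (∏ j ∈ Finset.Icc 1 k, (1 - X^j)) * (∏ j ∈ Finset.Icc 1 (n-k), (1 - X^j))
          = ∏ j ∈ Finset.Icc 1 n, (1 - X^j))
      ∧ ∑ k ∈ Finset.range (n+1),
          (-1)^k * B k * X^(Nat.choose (n-k) 2) * (∏ i ∈ Finset.Icc 1 k, (1 + X^i))
        = (-1)^n * X^(Nat.choose (n+1) 2) := by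
  exact ⟨gb n, fun k hk => gb_mul n k hk, key n⟩
end
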